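/- arXiv:2302.03243 — 7 statements merged into one kernel-verified Lean document; each statement's English description precedes it below -/
import Mathlib

section
/- In the projective plane over a field, if two triangles with no common vertices and no common sides are in perspective from a point, then the three intersection points of corresponding sides are collinear (Desargues' theorem). -/
open scoped LinearAlgebra.Projectivization
open Projectivization

/-- The linear span of a set of points of a projective space, as a submodule
of the underlying vector space. -/
noncomputable def pspan (K : Type*) {V : Type*} [DivisionRing K] [AddCommGroup V] [Module K V]
    (s : Set (ℙ K V)) : Submodule K V :=
  ⨆ P ∈ s, Projectivization.submodule P

lemma pspan_pair {K V' : Type*} [Field K] [AddCommGroup V'] [Module K V'] (P Q : ℙ K V') :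
    pspan K {P, Q} = Submodule.span K {P.rep, Q.rep} := by
  have : pspan K {P, Q} = P.submodule ⊔ Q.submodule := iSup_pair
  rw [this, submodule_eq, submodule_eq, ← Submodule.span_union, Set.singleton_union]

lemma pspan_range {K V' : Type*} [Field K] [AddCommGroup V'] [Module K V']
    (A : Fin 3 → ℙ K V') :
    pspan K (Set.range A) = Submodule.span K (Set.range fun i => (A i).rep) := by
  rw [Submodule.span_range_eq_iSup]
  unfold pspan
  rw [iSup_range]
  simp [submodule_eq]

lemma range_pair {α : Type*} (x y : α) : Set.range ![x, y] = {x, y} := by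
  ext z
  simp [Fin.exists_fin_two, or_comm]

lemma span_pair_finrank {K V' : Type*} [Field K] [AddCommGroup V'] [Module K V']
    {x y : V'} (h : LinearIndependent K ![x, y]) :
    Module.finrank K (Submodule.span K {x, y} : Submodule K V') = 2 := by
  have := finrank_span_eq_card h
  rwa [range_pair, Fintype.card_fin] at this

lemma line_inter {K : Type*} [Field K] {x y z w c : Fin 3 → K}
    (hxy : LinearIndependent K ![x, y]) (hzw : LinearIndependent K ![z, w])
    (hne : Submodule.span K {x, y} ≠ Submodule.span K {z, w})
    (hc : c ≠ 0) (hc1 : c ∈ Submodule.span K {x, y}) (hc2 : c ∈ Submodule.span K {z, w}) :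
    Submodule.span K {x, y} ⊓ Submodule.span K {z, w} = K ∙ c := by
  set U := Submodule.span K {x, y} with hU
  set W := Submodule.span K {z, w} with hW
  have hfU : Module.finrank K U = 2 := span_pair_finrank hxy
  have hfW : Module.finrank K W = 2 := span_pair_finrank hzw
  have hWU : ¬ W ≤ U := by
    intro h
    exact hne (Submodule.eq_of_le_of_finrank_eq h (by rw [hfU, hfW])).symm
  have hlt : U < U ⊔ W := left_lt_sup.mpr hWU
  have h3 : Module.finrank K ↥(U ⊔ W) = 3 := by
    have h1 : 2 < Module.finrank K ↥(U ⊔ W) := hfU ▸ Submodule.finrank_lt_finrank_of_lt hlt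
    have h2 : Module.finrank K ↥(U ⊔ W) ≤ 3 := by
      have := Submodule.finrank_le (U ⊔ W)
      rwa [Module.finrank_fin_fun] at this
    omega
  have hsum := Submodule.finrank_sup_add_finrank_inf_eq U W
  rw [h3, hfU, hfW] at hsum
  have hinf : Module.finrank K ↥(U ⊓ W) = 1 := by omega
  have hle : (K ∙ c) ≤ U ⊓ W := by
    rw [Submodule.span_singleton_le_iff_mem]
    exact ⟨hc1, hc2⟩
  exact (Submodule.eq_of_le_of_finrank_eq hle (by rw [hinf, finrank_span_singleton hc])).symm

/-- **Desargues' theorem** in the projective plane `PG(2,F)` over a field `F`.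
If triangles `A` and `B` share no vertex and no side, corresponding sides are
distinct, and the triangles are in perspective from a point `V`, then all
intersection points of corresponding sides lie on a common line (a rank-2
subspace of the rank-3 underlying vector space). -/
theorem desargues_plane {K : Type*} [Field K]
    (A B : Fin 3 → ℙ K (Fin 3 → K)) (V : ℙ K (Fin 3 → K))
    -- `A` and `B` are triangles: their vertices span the plane
    (hA : pspan K (Set.range A) = ⊤) (hB : pspan K (Set.range B) = ⊤)
    -- no common vertex
    (hvert : ∀ i j : Fin 3, A i ≠ B j)
    -- no common side (in particular corresponding sides are distinct lines)
    (hside : ∀ i j r s : Fin 3, i ≠ j → r ≠ s →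
      pspan K {A i, A j} ≠ pspan K {B r, B s})
    -- in perspective from the point `V`
    (hV : ∀ i : Fin 3, V.submodule ≤ pspan K {A i, B i}) :
    ∃ l : Submodule K (Fin 3 → K), Module.finrank K l = 2 ∧
      ∀ i j : Fin 3, i ≠ j → ∀ P : ℙ K (Fin 3 → K),
        P.submodule ≤ pspan K {A i, A j} → P.submodule ≤ pspan K {B i, B j} →
          P.submodule ≤ l := by
  classical
  set a : Fin 3 → (Fin 3 → K) := fun i => (A i).rep with ha_def
  set b : Fin 3 → (Fin 3 → K) := fun i => (B i).rep with hb_def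
  set v : Fin 3 → K := V.rep with hv_def
  -- linear independence of the triangle vertex representatives
  have hspanA : Submodule.span K (Set.range a) = ⊤ := by rw [← pspan_range, hA]
  have hspanB : Submodule.span K (Set.range b) = ⊤ := by rw [← pspan_range, hB]
  have hlia : LinearIndependent K a :=
    linearIndependent_of_top_le_span_of_card_eq_finrank (hspanA.ge)
      (by rw [Fintype.card_fin, Module.finrank_fin_fun])
  have hlib : LinearIndependent K b :=
    linearIndependent_of_top_le_span_of_card_eq_finrank (hspanB.ge)
      (by rw [Fintype.card_fin, Module.finrank_fin_fun])
  have pair_li : ∀ (f : Fin 3 → (Fin 3 → K)), LinearIndependent K f →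
      ∀ i j : Fin 3, i ≠ j → LinearIndependent K ![f i, f j] := by
    intro f hf i j hij
    have hinj : Function.Injective ![i, j] := by
      intro s t hst
      fin_cases s <;> fin_cases t <;> simp_all
    have := hf.comp ![i, j] hinj
    have heq : f ∘ ![i, j] = ![f i, f j] := by
      ext k m; fin_cases k <;> simp
    rwa [heq] at this
  -- decompose v along each perspective line
  have hdec : ∀ i : Fin 3, ∃ α β : K, α • a i + β • b i = v := by
    intro i
    have h := hV i
    rw [pspan_pair] at h
    have hv : v ∈ Submodule.span K {a i, b i} := by
      apply h
      rw [submodule_eq]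
      exact Submodule.mem_span_singleton_self _
    exact Submodule.mem_span_pair.mp hv
  choose α β hαβ using hdec
  -- at most one of the α's vanishes
  have hα2 : ∀ i j : Fin 3, i ≠ j → ¬(α i = 0 ∧ α j = 0) := by
    rintro i j hij ⟨h1, h2⟩
    have e1 : v = β i • b i := by rw [← hαβ i, h1]; module
    have e2 : v = β j • b j := by rw [← hαβ j, h2]; module
    have e3 : β i • b i = β j • b j := e1.symm.trans e2
    have : β i • b i + (-(β j)) • b j = 0 := by rw [e3]; module
    have hli := pair_li b hlib i j hij
    rw [LinearIndependent.pair_iff] at hli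
    obtain ⟨hbi, _⟩ := hli (β i) (-(β j)) this
    rw [hbi, zero_smul] at e1
    exact V.rep_nonzero e1
  -- the intersection vectors
  set c : Fin 3 → Fin 3 → (Fin 3 → K) := fun i j => α i • a i - α j • a j with hc_def
  have hcne : ∀ i j : Fin 3, i ≠ j → c i j ≠ 0 := by
    intro i j hij h0
    have hli := pair_li a hlia i j hij
    rw [LinearIndependent.pair_iff] at hli
    have : α i • a i + (-(α j)) • a j = 0 := by
      rw [hc_def] at h0; rw [neg_smul, ← sub_eq_add_neg]; exact h0
    obtain ⟨h1, h2⟩ := hli _ _ this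
    exact hα2 i j hij ⟨h1, by simpa using h2⟩
  have hcmemA : ∀ i j : Fin 3, c i j ∈ Submodule.span K {a i, a j} := by
    intro i j
    exact Submodule.mem_span_pair.mpr ⟨α i, -(α j), by rw [hc_def]; module⟩
  have hcmemB : ∀ i j : Fin 3, c i j ∈ Submodule.span K {b i, b j} := by
    intro i j
    refine Submodule.mem_span_pair.mpr ⟨-(β i), β j, ?_⟩
    have h12 : α i • a i + β i • b i = α j • a j + β j • b j := (hαβ i).trans (hαβ j).symm
    rw [hc_def]
    linear_combination (norm := module) h12.symm
  have claim : ∀ i j : Fin 3, i ≠ j →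
      Submodule.span K {a i, a j} ⊓ Submodule.span K {b i, b j} = K ∙ (c i j) := by
    intro i j hij
    refine line_inter (pair_li a hlia i j hij) (pair_li b hlib i j hij) ?_
      (hcne i j hij) (hcmemA i j) (hcmemB i j)
    have := hside i j i j hij hij
    rwa [pspan_pair, pspan_pair] at this
  -- the axis
  refine ⟨Submodule.span K {c 0 1, c 1 2}, ?_, ?_⟩
  · -- finrank = 2
    apply span_pair_finrank
    rw [LinearIndependent.pair_iff]
    intro s t hst
    have hsum : (s * α 0) • a 0 + ((t - s) * α 1) • a 1 + (-(t * α 2)) • a 2 = 0 := by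
      rw [hc_def] at hst
      rw [← hst]; module
    have h3 := Fintype.linearIndependent_iff.mp hlia ![s * α 0, (t - s) * α 1, -(t * α 2)]
      (by rw [Fin.sum_univ_three]; simpa using hsum)
    have h0 := h3 0
    have h1 := h3 1
    have h2 := h3 2
    simp only [Matrix.cons_val_zero, Matrix.cons_val_one, Matrix.head_cons,
      Matrix.cons_val_two, Matrix.tail_cons, neg_eq_zero, mul_eq_zero] at h0 h1 h2
    have n01 := hα2 0 1 (by decide)
    have n12 := hα2 1 2 (by decide)
    have n02 := hα2 0 2 (by decide)
    have hst0 : s = 0 ∧ t = 0 := by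
      rcases h0 with h | hA0
      · refine ⟨h, ?_⟩
        rcases h2 with h' | hA2
        · exact h'
        · have hts := h1.resolve_right (fun hh => n12 ⟨hh, hA2⟩)
          rw [sub_eq_zero.mp hts]; exact h
      · -- α 0 = 0, so α 1 ≠ 0 and α 2 ≠ 0
        have hA1 : α 1 ≠ 0 := fun h => n01 ⟨hA0, h⟩
        have hA2 : α 2 ≠ 0 := fun h => n02 ⟨hA0, h⟩
        have ht : t = 0 := h2.resolve_right hA2
        have hts : t - s = 0 := h1.resolve_right hA1
        refine ⟨?_, ht⟩
        have := sub_eq_zero.mp hts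
        rw [← this, ht]
    exact hst0
  · intro i j hij P hP1 hP2
    rw [pspan_pair] at hP1 hP2
    have hle : P.submodule ≤ Submodule.span K {a i, a j} ⊓ Submodule.span K {b i, b j} :=
      le_inf hP1 hP2
    rw [claim i j hij] at hle
    refine hle.trans ?_
    rw [Submodule.span_singleton_le_iff_mem]
    have hcases : (i = 0 ∧ j = 1) ∨ (i = 1 ∧ j = 0) ∨ (i = 0 ∧ j = 2) ∨ (i = 2 ∧ j = 0) ∨
        (i = 1 ∧ j = 2) ∨ (i = 2 ∧ j = 1) := by
      clear hle hP1 hP2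
      revert hij
      fin_cases i <;> fin_cases j <;> decide
    rcases hcases with ⟨rfl, rfl⟩ | ⟨rfl, rfl⟩ | ⟨rfl, rfl⟩ | ⟨rfl, rfl⟩ | ⟨rfl, rfl⟩ |
      ⟨rfl, rfl⟩
    · exact Submodule.mem_span_pair.mpr ⟨1, 0, by simp only [hc_def]; module⟩
    · exact Submodule.mem_span_pair.mpr ⟨-1, 0, by simp only [hc_def]; module⟩
    · exact Submodule.mem_span_pair.mpr ⟨1, 1, by simp only [hc_def]; module⟩
    · exact Submodule.mem_span_pair.mpr ⟨-1, -1, by simp only [hc_def]; module⟩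
    · exact Submodule.mem_span_pair.mpr ⟨0, 1, by simp only [hc_def]; module⟩
    · exact Submodule.mem_span_pair.mpr ⟨0, -1, by simp only [hc_def]; module⟩
end

section
/- Let A, B be two simplexes in projective n-space, sharing no point and no face, with corresponding edges meeting in points. Then for every t with 1 ≤ t ≤ n-1 and every (t+1)-subset S of indices, the intersection of the t-space spanned by {A_i : i ∈ S} and the t-space spanned by {B_i : i ∈ S} is a subspace of projective dimension t-1. -/
open scoped LinearAlgebra.Projectivization
open Projectivization

section Aux

open Submodule Module

variable {K V : Type*} [Field K] [AddCommGroup V] [Module K V]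

lemma pspan_image {ι : Type*} (f : ι → ℙ K V) (s : Set ι) :
    pspan K (f '' s) = Submodule.span K ((fun i => (f i).rep) '' s) := by
  rw [pspan, iSup_image, Submodule.span_eq_iSup_of_singleton_spans, iSup_image]
  simp only [Projectivization.submodule_eq]

lemma mem_of_le_span_singleton {N : Submodule K V} {o : V} (h : N ≤ K ∙ o) (hN : N ≠ ⊥) :
    o ∈ N := by
  obtain ⟨x, hxN, hx0⟩ := Submodule.exists_mem_ne_zero_of_ne_bot hN
  obtain ⟨c, rfl⟩ := Submodule.mem_span_singleton.1 (h hxN)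
  have hc : c ≠ 0 := by rintro rfl; simp at hx0
  have : c⁻¹ • (c • o) ∈ N := N.smul_mem _ hxN
  rwa [smul_smul, inv_mul_cancel₀ hc, one_smul] at this

lemma span_singleton_sup_eq_of_sub_mem {x y : V} {W : Submodule K V} (h : x - y ∈ W) :
    (K ∙ x) ⊔ W = (K ∙ y) ⊔ W := by
  apply le_antisymm
  · refine sup_le ?_ le_sup_right
    rw [Submodule.span_singleton_le_iff_mem]
    have : y + (x - y) ∈ (K ∙ y) ⊔ W :=
      Submodule.add_mem _ (Submodule.mem_sup_left (Submodule.mem_span_singleton_self y))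
        (Submodule.mem_sup_right h)
    simpa using this
  · refine sup_le ?_ le_sup_right
    rw [Submodule.span_singleton_le_iff_mem]
    have : x - (x - y) ∈ (K ∙ x) ⊔ W :=
      Submodule.sub_mem _ (Submodule.mem_sup_left (Submodule.mem_span_singleton_self x))
        (Submodule.mem_sup_right h)
    simpa using this

/-- A family of pairwise-intersecting planes (2-dim subspaces) is either concurrent
(all contain a common nonzero vector) or "coplanar" (all inside a 3-dim subspace). -/
lemma concurrent_or_coplanar [FiniteDimensional K V] {ι : Type*} (S : Finset ι)
    (L : ι → Submodule K V)
    (h2 : ∀ i ∈ S, finrank K (L i) = 2)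
    (hm : ∀ i ∈ S, ∀ j ∈ S, L i ⊓ L j ≠ ⊥) :
    (∃ o : V, o ≠ 0 ∧ ∀ i ∈ S, o ∈ L i) ∨
    (∃ W : Submodule K V, finrank K W ≤ 3 ∧ ∀ i ∈ S, L i ≤ W) := by
  rcases S.eq_empty_or_nonempty with rfl | ⟨i0, hi0⟩
  · exact Or.inr ⟨⊥, by simp, by simp⟩
  by_cases hall : ∀ i ∈ S, L i = L i0
  · exact Or.inr ⟨L i0, le_trans (le_of_eq (h2 i0 hi0)) (by norm_num), fun i hi => (hall i hi).le⟩
  push_neg at hall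
  obtain ⟨i1, hi1, hne⟩ := hall
  -- The intersection point of L i0 and L i1
  have hD : L i0 ⊓ L i1 ≠ ⊥ := hm i0 hi0 i1 hi1
  obtain ⟨o, hoD, ho0⟩ := Submodule.exists_mem_ne_zero_of_ne_bot hD
  have hDlt : L i0 ⊓ L i1 < L i0 := by
    refine lt_of_le_of_ne inf_le_left ?_
    intro h
    have h01 : L i0 ≤ L i1 := by rw [← h]; exact inf_le_right
    exact hne (Submodule.eq_of_le_of_finrank_le h01 (by rw [h2 i0 hi0, h2 i1 hi1])).symm
  have hDfr : finrank K ↥(L i0 ⊓ L i1) = 1 := by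
    have hlt := Submodule.finrank_lt_finrank_of_lt hDlt
    rw [h2 i0 hi0] at hlt
    have hge : 1 ≤ finrank K ↥(L i0 ⊓ L i1) := by
      have : (K ∙ o) ≤ L i0 ⊓ L i1 := by rwa [Submodule.span_singleton_le_iff_mem]
      have := Submodule.finrank_mono this
      rwa [finrank_span_singleton ho0] at this
    omega
  have hDeq : L i0 ⊓ L i1 = K ∙ o := by
    refine (Submodule.eq_of_le_of_finrank_le ?_ ?_).symm
    · rwa [Submodule.span_singleton_le_iff_mem]
    · rw [hDfr, finrank_span_singleton ho0]
  have hWfr : finrank K ↥(L i0 ⊔ L i1) = 3 := by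
    have := Submodule.finrank_sup_add_finrank_inf_eq (L i0) (L i1)
    rw [h2 i0 hi0, h2 i1 hi1, hDfr] at this
    omega
  set W := L i0 ⊔ L i1 with hW
  by_cases hWall : ∀ i ∈ S, L i ≤ W
  · exact Or.inr ⟨W, hWfr.le, hWall⟩
  push_neg at hWall
  obtain ⟨k, hk, hkW⟩ := hWall
  -- key: any member not inside W contains o, and meets W exactly in K ∙ o
  have key : ∀ m ∈ S, ¬ L m ≤ W → L m ⊓ W = K ∙ o := by
    intro m hm' hmW
    have hlt : L m ⊓ W < L m := by
      refine lt_of_le_of_ne inf_le_left ?_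
      intro h
      exact hmW (by rw [← h]; exact inf_le_right)
    have hfr : finrank K ↥(L m ⊓ W) ≤ 1 := by
      have := Submodule.finrank_lt_finrank_of_lt hlt
      rw [h2 m hm'] at this
      omega
    obtain ⟨q, hq, hq0⟩ := Submodule.exists_mem_ne_zero_of_ne_bot (hm m hm' i0 hi0)
    have hqW : q ∈ L m ⊓ W := ⟨hq.1, le_sup_left (a := L i0) hq.2⟩
    have hqeq : L m ⊓ W = K ∙ q := by
      refine (Submodule.eq_of_le_of_finrank_le ?_ ?_).symm
      · rwa [Submodule.span_singleton_le_iff_mem]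
      · rwa [finrank_span_singleton hq0]
    -- q also lies in L i1, hence in the intersection point
    have hq1 : q ∈ L m ⊓ L i1 := by
      refine mem_of_le_span_singleton ?_ (hm m hm' i1 hi1)
      rw [← hqeq]
      exact inf_le_inf_left _ (le_sup_right)
    have hqD : q ∈ K ∙ o := by rw [← hDeq]; exact ⟨hq.2, hq1.2⟩
    obtain ⟨c, rfl⟩ := Submodule.mem_span_singleton.1 hqD
    have hc : c ≠ 0 := by rintro rfl; simp at hq0
    rw [hqeq, Submodule.span_singleton_smul_eq (IsUnit.mk0 c hc)]
  have hoW : ∀ m ∈ S, ¬ L m ≤ W → o ∈ L m := by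
    intro m hm' hmW
    have := key m hm' hmW
    have : o ∈ L m ⊓ W := by rw [this]; exact Submodule.mem_span_singleton_self o
    exact this.1
  left
  refine ⟨o, ho0, fun i hi => ?_⟩
  by_cases hiW : L i ≤ W
  · have h1 : L i ⊓ L k ≤ K ∙ o := by
      rw [← key k hk hkW]
      exact le_inf inf_le_right (inf_le_left.trans hiW)
    exact (Submodule.mem_inf.1 (mem_of_le_span_singleton h1 (hm i hi k hk))).1
  · exact hoW i hi hiW

end Aux

section Main

open Submodule Module

variable {K : Type*} [Field K] {n : ℕ}

/-- Two spanning families whose corresponding "edges" meet and which share no point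
cannot span the same subspace on a common proper index set. -/
lemma no_common_span (a b : Fin (n+1) → (Fin (n+1) → K))
    (hai : LinearIndependent K a) (hbi : LinearIndependent K b)
    (nonpar : ∀ i j (c : K), a i ≠ c • b j)
    (meet : ∀ i j, i ≠ j → ∃ p, p ≠ 0 ∧ p ∈ span K {a i, a j} ∧ p ∈ span K {b i, b j})
    (hface : ∀ i0 : Fin (n+1), span K (a '' {k | k ≠ i0}) ≠ span K (b '' {k | k ≠ i0})) :
    ∀ d : ℕ, ∀ S : Finset (Fin (n+1)), S.Nonempty → S.card + d = n →
      span K (a '' ↑S) ≠ span K (b '' ↑S) := by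
  intro d
  induction d with
  | zero =>
    intro S hSne hScard
    simp only [Nat.add_zero] at hScard
    have hcompl : Sᶜ.card = 1 := by
      have := Finset.card_compl S
      simp only [Fintype.card_fin] at this
      omega
    obtain ⟨i0, hi0⟩ := Finset.card_eq_one.1 hcompl
    have hSet : (↑S : Set (Fin (n+1))) = {k | k ≠ i0} := by
      ext k
      simp only [Finset.coe_sort_coe, Set.mem_setOf_eq, Finset.mem_coe]
      constructor
      · intro hk hki
        have : k ∈ Sᶜ := by rw [hi0]; simp [hki]
        exact (Finset.mem_compl.1 this) hk
      · intro hk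
        by_contra hkS
        have : k ∈ Sᶜ := Finset.mem_compl.2 hkS
        rw [hi0, Finset.mem_singleton] at this
        exact hk this
    rw [hSet]
    exact hface i0
  | succ d ih =>
    intro S hSne hScard heq
    -- pick j outside S and i inside S
    have hSu : S ≠ Finset.univ := by
      intro h
      rw [h, Finset.card_univ, Fintype.card_fin] at hScard
      omega
    obtain ⟨j, hjS⟩ : ∃ j, j ∉ S := by
      by_contra h
      push_neg at h
      exact hSu (Finset.eq_univ_iff_forall.2 h)
    obtain ⟨i, hiS⟩ := hSne
    have hij : i ≠ j := fun h => hjS (h ▸ hiS)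
    obtain ⟨p, hp0, hpa, hpb⟩ := meet i j hij
    obtain ⟨α, β, hab⟩ := Submodule.mem_span_pair.1 hpa
    obtain ⟨γ, δ, hcd⟩ := Submodule.mem_span_pair.1 hpb
    have haiS : a i ∈ span K (a '' ↑S) := Submodule.subset_span ⟨i, hiS, rfl⟩
    have hbiS : b i ∈ span K (a '' ↑S) := by
      rw [heq]; exact Submodule.subset_span ⟨i, hiS, rfl⟩
    have hajS : a j ∉ span K (a '' ↑S) := hai.notMem_span_image (by simpa using hjS)
    have hbjS : b j ∉ span K (a '' ↑S) := by
      rw [heq]; exact hbi.notMem_span_image (by simpa using hjS)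
    by_cases hβ : β = 0
    · subst hβ
      rw [zero_smul, add_zero] at hab
      have hα : α ≠ 0 := by rintro rfl; rw [zero_smul] at hab; exact hp0 hab.symm
      by_cases hδ : δ = 0
      · subst hδ
        rw [zero_smul, add_zero] at hcd
        -- α • a i = γ • b i, so a i parallel to b i
        have : a i = (α⁻¹ * γ) • b i := by
          rw [mul_smul, hcd, ← hab, inv_smul_smul₀ hα]
        exact nonpar i i _ this
      · -- b j ∈ span a_S
        apply hbjS
        have : b j = δ⁻¹ • (α • a i - γ • b i) := by
          rw [hab, ← hcd, add_sub_cancel_left, inv_smul_smul₀ hδ]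
        rw [this]
        exact Submodule.smul_mem _ _ (Submodule.sub_mem _ (Submodule.smul_mem _ _ haiS)
          (Submodule.smul_mem _ _ hbiS))
    · by_cases hδ : δ = 0
      · subst hδ
        rw [zero_smul, add_zero] at hcd
        apply hajS
        have : a j = β⁻¹ • (γ • b i - α • a i) := by
          rw [hcd, ← hab, add_sub_cancel_left, inv_smul_smul₀ hβ]
        rw [this]
        exact Submodule.smul_mem _ _ (Submodule.sub_mem _ (Submodule.smul_mem _ _ hbiS)
          (Submodule.smul_mem _ _ haiS))
      · -- main case: extend S by j
        have hkey : β • a j - δ • b j ∈ span K (a '' ↑S) := by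
          have : β • a j - δ • b j = γ • b i - α • a i := by
            have h := hab.trans hcd.symm
            rw [sub_eq_sub_iff_add_eq_add, add_comm (β • a j)]
            exact h
          rw [this]
          exact Submodule.sub_mem _ (Submodule.smul_mem _ _ hbiS)
            (Submodule.smul_mem _ _ haiS)
        apply ih (insert j S) ⟨j, Finset.mem_insert_self j S⟩
          (by rw [Finset.card_insert_of_notMem hjS]; omega)
        have himg : ∀ v : Fin (n+1) → (Fin (n+1) → K),
            span K (v '' ↑(insert j S)) = (K ∙ v j) ⊔ span K (v '' ↑S) := by
          intro v
          rw [Finset.coe_insert, Set.image_insert_eq, Submodule.span_insert]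
        rw [himg a, himg b, heq]
        have h1 : (K ∙ a j) ⊔ span K (b '' ↑S) = (K ∙ (β • a j)) ⊔ span K (b '' ↑S) := by
          rw [Submodule.span_singleton_smul_eq (IsUnit.mk0 β hβ)]
        have h2 : (K ∙ b j) ⊔ span K (b '' ↑S) = (K ∙ (δ • b j)) ⊔ span K (b '' ↑S) := by
          rw [Submodule.span_singleton_smul_eq (IsUnit.mk0 δ hδ)]
        rw [h1, h2]
        apply span_singleton_sup_eq_of_sub_mem
        rwa [← heq]

end Main

/-- For two simplexes `A`, `B` in projective `n`-space sharing no point and no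
face, with corresponding edges meeting in points, the intersection of
corresponding `t`-spaces (spans of `t+1` corresponding points) is a subspace of
projective dimension `t-1`, i.e. of vector-space dimension `t`,
for `1 ≤ t ≤ n-1`. -/
theorem corresponding_t_spaces_intersection {K : Type*} [Field K] {n : ℕ}
    (A B : Fin (n+1) → ℙ K (Fin (n+1) → K))
    (hA : pspan K (Set.range A) = ⊤) (hB : pspan K (Set.range B) = ⊤)
    (hpt : ∀ i j : Fin (n+1), A i ≠ B j)
    (hface : ∀ i j : Fin (n+1),
      pspan K (A '' {k | k ≠ i}) ≠ pspan K (B '' {k | k ≠ j}))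
    (hmeet : ∀ i j : Fin (n+1), i ≠ j → ∃ P : ℙ K (Fin (n+1) → K),
      P.submodule ≤ pspan K {A i, A j} ∧ P.submodule ≤ pspan K {B i, B j}) :
    ∀ t : ℕ, 1 ≤ t → t ≤ n - 1 → ∀ S : Finset (Fin (n+1)), S.card = t + 1 →
      Module.finrank K ↥(pspan K (A '' ↑S) ⊓ pspan K (B '' ↑S)) = t := by
  classical
  intro t ht1 ht2 S hScard
  have hn2 : 2 ≤ n := by omega
  -- translate everything to vector representatives
  rw [pspan_image, pspan_image]
  rw [← Set.image_univ, pspan_image, Set.image_univ] at hA hB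
  simp only [pspan_image] at hface
  set a : Fin (n+1) → (Fin (n+1) → K) := fun i => (A i).rep with ha
  set b : Fin (n+1) → (Fin (n+1) → K) := fun i => (B i).rep with hb
  have ha0 : ∀ i, a i ≠ 0 := fun i => (A i).rep_nonzero
  have hb0 : ∀ i, b i ≠ 0 := fun i => (B i).rep_nonzero
  have hfrV : Module.finrank K (Fin (n+1) → K) = n + 1 := by
    simp [Module.finrank_pi]
  have hai : LinearIndependent K a :=
    linearIndependent_of_top_le_span_of_card_eq_finrank (le_of_eq hA.symm)
      (by simp [hfrV])
  have hbi : LinearIndependent K b :=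
    linearIndependent_of_top_le_span_of_card_eq_finrank (le_of_eq hB.symm)
      (by simp [hfrV])
  have nonpar : ∀ i j (c : K), a i ≠ c • b j := by
    intro i j c hc
    apply hpt i j
    have hc0 : c ≠ 0 := by
      rintro rfl
      rw [zero_smul] at hc
      exact ha0 i hc
    rw [← (A i).mk_rep, ← (B j).mk_rep, mk_eq_mk_iff]
    exact ⟨Units.mk0 c hc0, hc.symm⟩
  have pairP : ∀ (f : Fin (n+1) → ℙ K (Fin (n+1) → K)) (i j : Fin (n+1)),
      pspan K {f i, f j} = Submodule.span K {(f i).rep, (f j).rep} := by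
    intro f i j
    rw [show ({f i, f j} : Set _) = f '' {i, j} from (Set.image_pair f i j).symm,
      pspan_image, Set.image_pair]
  have meet : ∀ i j, i ≠ j → ∃ p, p ≠ 0 ∧ p ∈ Submodule.span K {a i, a j} ∧
      p ∈ Submodule.span K {b i, b j} := by
    intro i j hij
    obtain ⟨P, h1, h2⟩ := hmeet i j hij
    have hPmem : P.rep ∈ P.submodule := by
      rw [P.submodule_eq]
      exact Submodule.mem_span_singleton_self _
    refine ⟨P.rep, P.rep_nonzero, ?_, ?_⟩
    · have := h1 hPmem
      rwa [pairP A i j] at this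
    · have := h2 hPmem
      rwa [pairP B i j] at this
  have hface' : ∀ i0 : Fin (n+1),
      Submodule.span K (a '' {k | k ≠ i0}) ≠ Submodule.span K (b '' {k | k ≠ i0}) :=
    fun i0 => hface i0 i0
  have hSne : S.Nonempty := Finset.card_pos.1 (by omega)
  have hXY : Submodule.span K (a '' ↑S) ≠ Submodule.span K (b '' ↑S) :=
    no_common_span a b hai hbi nonpar meet hface' (n - S.card) S hSne (by omega)
  -- dimensions of the two spans
  have frspan : ∀ (v : Fin (n+1) → (Fin (n+1) → K)), LinearIndependent K v →
      Module.finrank K ↥(Submodule.span K (v '' ↑S)) = t + 1 := by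
    intro v hv
    rw [Set.image_eq_range]
    have hvi : LinearIndependent K (fun x : ↥(↑S : Set (Fin (n+1))) => v ↑x) :=
      hv.comp _ Subtype.val_injective
    rw [finrank_span_eq_card hvi]
    simp [hScard]
  -- the lines through corresponding vertices
  have pairzero : ∀ i j (α γ : K), α • a i = γ • b j → α = 0 ∧ γ = 0 := by
    intro i j α γ h
    have hα : α = 0 := by
      by_contra hα
      exact nonpar i j (α⁻¹ * γ) (by rw [mul_smul, ← h, inv_smul_smul₀ hα])
    refine ⟨hα, ?_⟩
    rw [hα, zero_smul] at h
    rcases smul_eq_zero.1 h.symm with h' | h'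
    · exact h'
    · exact absurd h' (hb0 j)
  have hL2 : ∀ i, Module.finrank K ↥(Submodule.span K {a i, b i}) = 2 := by
    intro i
    have hind : LinearIndependent K ![a i, b i] := by
      rw [linearIndependent_fin2]
      refine ⟨by simpa using hb0 i, fun c hcc => ?_⟩
      simp only [Matrix.cons_val_one, Matrix.head_cons, Matrix.cons_val_zero] at hcc
      exact nonpar i i c hcc.symm
    have h := finrank_span_eq_card hind
    rw [show Set.range ![a i, b i] = {a i, b i} by
      simp [Matrix.range_cons, Matrix.range_empty, Set.pair_comm], Fintype.card_fin] at h
    exact h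
  have hmS : ∀ i ∈ S, ∀ j ∈ S,
      Submodule.span K {a i, b i} ⊓ Submodule.span K {a j, b j} ≠ ⊥ := by
    intro i hi j hj
    rw [Submodule.ne_bot_iff]
    rcases eq_or_ne i j with rfl | hij
    · exact ⟨a i, Submodule.mem_inf.2
        ⟨Submodule.subset_span (by simp), Submodule.subset_span (by simp)⟩, ha0 i⟩
    · obtain ⟨p, hp0, hpa, hpb⟩ := meet i j hij
      obtain ⟨α, β, hab⟩ := Submodule.mem_span_pair.1 hpa
      obtain ⟨γ, δ, hcd⟩ := Submodule.mem_span_pair.1 hpb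
      have hrel : α • a i - γ • b i = δ • b j - β • a j := by
        rw [sub_eq_sub_iff_add_eq_add, add_comm (δ • b j)]
        exact hab.trans hcd.symm
      refine ⟨α • a i - γ • b i, Submodule.mem_inf.2 ⟨?_, ?_⟩, ?_⟩
      · exact Submodule.mem_span_pair.2 ⟨α, -γ, by rw [neg_smul, ← sub_eq_add_neg]⟩
      · rw [hrel]
        exact Submodule.mem_span_pair.2 ⟨-β, δ, by rw [neg_smul]; abel⟩
      · intro h0
        obtain ⟨hα, hγ⟩ := pairzero i i α γ (sub_eq_zero.1 h0)
        rw [h0] at hrel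
        obtain ⟨hβ, hδ⟩ := pairzero j j β δ (sub_eq_zero.1 hrel.symm).symm
        apply hp0
        rw [← hab, hα, hβ, zero_smul, zero_smul, add_zero]
  -- endgame
  set X := Submodule.span K (a '' ↑S) with hX
  set Y := Submodule.span K (b '' ↑S) with hY
  have frX : Module.finrank K ↥X = t + 1 := frspan a hai
  have frY : Module.finrank K ↥Y = t + 1 := frspan b hbi
  have haX : ∀ i ∈ S, a i ∈ X := fun i hi => Submodule.subset_span ⟨i, hi, rfl⟩
  have hbY : ∀ i ∈ S, b i ∈ Y := fun i hi => Submodule.subset_span ⟨i, hi, rfl⟩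
  have hlow : t + 2 ≤ Module.finrank K ↥(X ⊔ Y) := by
    by_contra hcon
    push_neg at hcon
    have h1 : Module.finrank K ↥(X ⊔ Y) ≤ Module.finrank K ↥X := by omega
    have h2 : X = X ⊔ Y := Submodule.eq_of_le_of_finrank_le le_sup_left h1
    have h3 : Y ≤ X := by rw [h2]; exact le_sup_right
    exact hXY (Submodule.eq_of_le_of_finrank_le h3 (by omega)).symm
  have hup : Module.finrank K ↥(X ⊔ Y) ≤ t + 2 := by
    rcases concurrent_or_coplanar S (fun i => Submodule.span K {a i, b i})
        (fun i _ => hL2 i) hmS with ⟨o, ho0, hcon⟩ | ⟨W, hW3, hcop⟩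
    · -- concurrent case
      have main : ∀ z : Fin (n+1) → K, Module.finrank K ↥(X ⊔ (K ∙ z)) ≤ t + 2 := by
        intro z
        have := Submodule.finrank_sup_add_finrank_inf_eq X (K ∙ z)
        have hz1 : Module.finrank K ↥(K ∙ z) ≤ 1 := by
          rcases eq_or_ne z 0 with rfl | hz
          · rw [Submodule.span_zero_singleton]
            simp
          · rw [finrank_span_singleton hz]
        omega
      by_cases hex : ∃ i2 ∈ S, o ∈ (K ∙ a i2)
      · obtain ⟨i2, hi2, ho2⟩ := hex
        obtain ⟨e, rfl⟩ := Submodule.mem_span_singleton.1 ho2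
        have hoX : e • a i2 ∈ X := X.smul_mem _ (haX i2 hi2)
        have hsub : X ⊔ Y ≤ X ⊔ (K ∙ b i2) := by
          refine sup_le le_sup_left ?_
          rw [hY, Submodule.span_le]
          rintro x ⟨i, hi, rfl⟩
          rcases eq_or_ne i i2 with rfl | hne
          · exact Submodule.mem_sup_right (Submodule.mem_span_singleton_self _)
          · obtain ⟨c, d, hcd⟩ := Submodule.mem_span_pair.1 (hcon i hi)
            have hd : d ≠ 0 := by
              intro hd0
              rw [hd0, zero_smul, add_zero] at hcd
              have hc : c ≠ 0 := by
                intro hc0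
                rw [hc0, zero_smul] at hcd
                exact ho0 hcd.symm
              have hmem : a i ∈ Submodule.span K (a '' {i2}) := by
                rw [Set.image_singleton]
                exact Submodule.mem_span_singleton.2
                  ⟨c⁻¹ * e, by rw [mul_smul, ← hcd, inv_smul_smul₀ hc]⟩
              exact hai.notMem_span_image (by simpa using hne) hmem
            have hbmem : b i = d⁻¹ • (e • a i2 - c • a i) := by
              rw [← hcd, add_sub_cancel_left, inv_smul_smul₀ hd]
            rw [hbmem]
            exact Submodule.mem_sup_left
              (X.smul_mem _ (X.sub_mem hoX (X.smul_mem _ (haX i hi))))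
        exact le_trans (Submodule.finrank_mono hsub) (main (b i2))
      · push_neg at hex
        have hsub : X ⊔ Y ≤ X ⊔ (K ∙ o) := by
          refine sup_le le_sup_left ?_
          rw [hY, Submodule.span_le]
          rintro x ⟨i, hi, rfl⟩
          obtain ⟨c, d, hcd⟩ := Submodule.mem_span_pair.1 (hcon i hi)
          have hd : d ≠ 0 := by
            intro hd0
            rw [hd0, zero_smul, add_zero] at hcd
            exact hex i hi (Submodule.mem_span_singleton.2 ⟨c, hcd⟩)
          have hbmem : b i = d⁻¹ • (o - c • a i) := by
            rw [← hcd, add_sub_cancel_left, inv_smul_smul₀ hd]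
          rw [hbmem]
          exact Submodule.smul_mem _ _ (Submodule.sub_mem _
            (Submodule.mem_sup_right (Submodule.mem_span_singleton_self o))
            (Submodule.mem_sup_left (X.smul_mem _ (haX i hi))))
        exact le_trans (Submodule.finrank_mono hsub) (main o)
    · -- coplanar case
      have hsub : X ⊔ Y ≤ W := by
        apply sup_le
        · rw [hX, Submodule.span_le]
          rintro x ⟨i, hi, rfl⟩
          exact hcop i hi (Submodule.subset_span (by simp))
        · rw [hY, Submodule.span_le]
          rintro x ⟨i, hi, rfl⟩
          exact hcop i hi (Submodule.subset_span (by simp))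
      have := Submodule.finrank_mono hsub
      omega
  have hsum := Submodule.finrank_sup_add_finrank_inf_eq X Y
  omega
end

section
/- Let A, B be two simplexes in projective n-space (n ≥ 2) in perspective from a point V and sharing no point and no face. Then the intersections of all pairs of corresponding faces (each an (n-2)-dimensional subspace) lie in a single fixed hyperplane of the ambient space. -/
open scoped LinearAlgebra.Projectivization
open Projectivization

open Module Submodule

lemma pspan_eq_span {K V : Type*} [Field K] [AddCommGroup V] [Module K V] (s : Set (ℙ K V)) :
    pspan K s = Submodule.span K (Projectivization.rep '' s) := by
  apply le_antisymm
  · refine iSup₂_le fun P hP => ?_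
    rw [Projectivization.submodule_eq]
    exact Submodule.span_mono (Set.singleton_subset_iff.2 ⟨P, hP, rfl⟩)
  · rw [Submodule.span_le]
    rintro x ⟨P, hP, rfl⟩
    have h1 : P.rep ∈ P.submodule := by
      rw [Projectivization.submodule_eq]
      exact Submodule.mem_span_singleton_self _
    exact (le_iSup₂ (f := fun (P : ℙ K V) (_ : P ∈ s) => P.submodule) P hP) h1

lemma finrank_span_ne {K M : Type*} [Field K] [AddCommGroup M] [Module K M] {n : ℕ}
    {f : Fin (n+1) → M} (hf : LinearIndependent K f) (i : Fin (n+1)) :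
    finrank K (span K (f '' {k | k ≠ i})) = n := by
  rw [Set.image_eq_range]
  have hli : LinearIndependent K (fun x : {k | k ≠ i} => f ↑x) :=
    hf.comp (Subtype.val : {k | k ≠ i} → _) Subtype.val_injective
  have hcard : Fintype.card {k : Fin (n+1) // ¬ k = i} = n := by
    rw [Fintype.card_subtype_compl, Fintype.card_subtype_eq]
    simp
  exact (finrank_span_eq_card hli).trans hcard

lemma main_aux {K : Type*} [Field K] {n : ℕ} (hn : 2 ≤ n)
    (a b : Fin (n+1) → Fin (n+1) → K)
    (ha : LinearIndependent K a) (hb : LinearIndependent K b)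
    (v : Fin (n+1) → K)
    (α β : Fin (n+1) → K) (hvab : ∀ i, v = α i • a i + β i • b i)
    (hβ : ∀ i, β i ≠ 0)
    (hface : ∀ i, span K (a '' {k | k ≠ i}) ≠ span K (b '' {k | k ≠ i})) :
    ∃ H : Submodule K (Fin (n+1) → K), finrank K H = n ∧
      ∀ i, span K (a '' {k | k ≠ i}) ⊓ span K (b '' {k | k ≠ i}) ≤ H := by
  have frtop : finrank K (Fin (n+1) → K) = n + 1 := Module.finrank_fin_fun K
  have frX : ∀ i, finrank K (span K (a '' {k | k ≠ i})) = n := fun i => finrank_span_ne ha i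
  have frY : ∀ i, finrank K (span K (b '' {k | k ≠ i})) = n := fun i => finrank_span_ne hb i
  have hbk : ∀ k, b k = (β k)⁻¹ • (v - α k • a k) := by
    intro k
    rw [eq_inv_smul_iff₀ (hβ k), hvab k, add_sub_cancel_left]
  by_cases hα : ∃ p, α p = 0
  · -- degenerate case : V = B p ; take H = the face of A opposite to p
    obtain ⟨p, hp⟩ := hα
    have hvp : v = β p • b p := by rw [hvab p, hp, zero_smul, zero_add]
    refine ⟨span K (a '' {k | k ≠ p}), frX p, fun i => ?_⟩
    rcases eq_or_ne i p with rfl | hip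
    · exact inf_le_left
    · intro x hx
      obtain ⟨hxA, hxB⟩ := hx
      have hYle : span K (b '' {k | k ≠ i}) ≤
          span K (insert (b p) (a '' {k | k ≠ i ∧ k ≠ p})) := by
        refine span_le.mpr ?_
        rintro _ ⟨k, hk, rfl⟩
        rcases eq_or_ne k p with rfl | hkp
        · exact subset_span (Set.mem_insert _ _)
        · rw [hbk k, hvp]
          exact smul_mem _ _ (sub_mem (smul_mem _ _ (subset_span (Set.mem_insert _ _)))
            (smul_mem _ _ (subset_span (Set.mem_insert_of_mem _ ⟨k, ⟨hk, hkp⟩, rfl⟩))))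
      have hsub : span K (a '' {k | k ≠ i ∧ k ≠ p}) ≤ span K (a '' {k | k ≠ i}) :=
        span_mono (Set.image_mono fun k hk => hk.1)
      obtain ⟨c, z, hz, hxz⟩ := mem_span_insert.mp (hYle hxB)
      rcases eq_or_ne c 0 with rfl | hc
      · rw [hxz, zero_smul, zero_add]
        exact span_mono (Set.image_mono fun k hk => hk.2) hz
      · exfalso
        have hbp : b p ∈ span K (a '' {k | k ≠ i}) := by
          have hb' : b p = c⁻¹ • (x - z) := by
            rw [eq_inv_smul_iff₀ hc, hxz, add_sub_cancel_right]
          rw [hb']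
          exact smul_mem _ _ (sub_mem hxA (hsub hz))
        have hvXi : v ∈ span K (a '' {k | k ≠ i}) := by
          rw [hvp]; exact smul_mem _ _ hbp
        have hYX : span K (b '' {k | k ≠ i}) ≤ span K (a '' {k | k ≠ i}) := by
          refine span_le.mpr ?_
          rintro _ ⟨k, hk, rfl⟩
          rcases eq_or_ne k p with rfl | hkp
          · exact hbp
          · rw [hbk k]
            exact smul_mem _ _ (sub_mem hvXi (smul_mem _ _ (subset_span ⟨k, hk, rfl⟩)))
        exact hface i
          ((Submodule.eq_of_le_of_finrank_le hYX (le_of_eq ((frX i).trans (frY i).symm))).symm)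
  · -- main case : all α i ≠ 0
    push_neg at hα
    have card_eq : Fintype.card (Fin (n+1)) = finrank K (Fin (n+1) → K) := by
      rw [frtop, Fintype.card_fin]
    let bA : Basis (Fin (n+1)) K (Fin (n+1) → K) :=
      basisOfLinearIndependentOfCardEqFinrank ha card_eq
    have hbA' : ⇑bA = a := coe_basisOfLinearIndependentOfCardEqFinrank ha card_eq
    set φ : (Fin (n+1) → K) →ₗ[K] K := ∑ k, (α k)⁻¹ • bA.coord k with hφ
    have hφa : ∀ j, φ (a j) = (α j)⁻¹ := by
      intro j
      rw [hφ, ← hbA']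
      simp only [LinearMap.sum_apply, LinearMap.smul_apply, Basis.coord_apply,
        Basis.repr_self_apply, smul_eq_mul]
      simp [Finset.sum_ite_eq]
    have hφu : ∀ j, φ (α j • a j) = 1 := by
      intro j
      rw [map_smul, hφa, smul_eq_mul, mul_inv_cancel₀ (hα j)]
    have hker : finrank K (LinearMap.ker φ) = n := by
      have hr : LinearMap.range φ = ⊤ := by
        rw [LinearMap.range_eq_top]
        intro c
        refine ⟨(c * α 0) • a 0, ?_⟩
        rw [map_smul, hφa, smul_eq_mul, mul_assoc, mul_inv_cancel₀ (hα 0), mul_one]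
      have h2 := LinearMap.finrank_range_add_finrank_ker φ
      rw [hr, finrank_top, frtop, Module.finrank_self] at h2
      omega
    refine ⟨LinearMap.ker φ, hker, fun i => ?_⟩
    have : Nontrivial (Fin (n+1)) := ⟨⟨⟨0, by omega⟩, ⟨1, by omega⟩, by simp [Fin.ext_iff]⟩⟩
    obtain ⟨m, hmi⟩ := exists_ne i
    have hvw : ∀ k, v = α k • a k + β k • b k := hvab
    -- the (n-1)-dimensional space of differences
    have hDX : span K ((fun k => α k • a k - α m • a m) '' {k | k ≠ i}) ≤
        span K (a '' {k | k ≠ i}) := by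
      refine span_le.mpr ?_
      rintro _ ⟨k, hk, rfl⟩
      exact sub_mem (smul_mem _ _ (subset_span ⟨k, hk, rfl⟩))
        (smul_mem _ _ (subset_span ⟨m, hmi, rfl⟩))
    have hDY : span K ((fun k => α k • a k - α m • a m) '' {k | k ≠ i}) ≤
        span K (b '' {k | k ≠ i}) := by
      refine span_le.mpr ?_
      rintro _ ⟨k, hk, rfl⟩
      show α k • a k - α m • a m ∈ (span K (b '' {k | k ≠ i}) : Submodule K _)
      have hkm : α k • a k - α m • a m = β m • b m - β k • b k := by
        have h1 := (hvw k).symm.trans (hvw m)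
        rw [add_comm (α m • a m)] at h1
        exact sub_eq_sub_iff_add_eq_add.mpr h1
      rw [hkm]
      exact sub_mem (smul_mem _ _ (subset_span ⟨m, hmi, rfl⟩))
        (smul_mem _ _ (subset_span ⟨k, hk, rfl⟩))
    have hDker : span K ((fun k => α k • a k - α m • a m) '' {k | k ≠ i}) ≤
        LinearMap.ker φ := by
      refine span_le.mpr ?_
      rintro _ ⟨k, hk, rfl⟩
      show α k • a k - α m • a m ∈ (LinearMap.ker φ : Submodule K _)
      rw [LinearMap.mem_ker, map_sub, hφu, hφu, sub_self]
    have hXY : span K (a '' {k | k ≠ i}) ≠ span K (b '' {k | k ≠ i}) := hface i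
    have frsup : finrank K ↥(span K (a '' {k | k ≠ i}) ⊔ span K (b '' {k | k ≠ i})) = n + 1 := by
      have hle : finrank K ↥(span K (a '' {k | k ≠ i}) ⊔ span K (b '' {k | k ≠ i})) ≤ n + 1 :=
        (Submodule.finrank_le _).trans frtop.le
      by_contra hne
      have hle' : finrank K ↥(span K (a '' {k | k ≠ i}) ⊔ span K (b '' {k | k ≠ i})) ≤ n := by
        omega
      have h1 : span K (a '' {k | k ≠ i}) =
          span K (a '' {k | k ≠ i}) ⊔ span K (b '' {k | k ≠ i}) :=
        Submodule.eq_of_le_of_finrank_le le_sup_left (by rw [frX i]; exact hle')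
      have h2 : span K (b '' {k | k ≠ i}) ≤ span K (a '' {k | k ≠ i}) := h1 ▸ le_sup_right
      exact hXY (Submodule.eq_of_le_of_finrank_le h2 (le_of_eq ((frX i).trans (frY i).symm))).symm
    have hinf : finrank K ↥(span K (a '' {k | k ≠ i}) ⊓ span K (b '' {k | k ≠ i})) = n - 1 := by
      have h2 := Submodule.finrank_sup_add_finrank_inf_eq
        (span K (a '' {k | k ≠ i})) (span K (b '' {k | k ≠ i}))
      rw [frX i, frY i, frsup] at h2
      omega
    have hum : α m • a m ≠ 0 := smul_ne_zero (hα m) (ha.ne_zero m)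
    have hXsup : span K (a '' {k | k ≠ i}) ≤
        span K ((fun k => α k • a k - α m • a m) '' {k | k ≠ i}) ⊔ span K {α m • a m} := by
      refine span_le.mpr ?_
      rintro _ ⟨k, hk, rfl⟩
      have hak : a k = (α k)⁻¹ • ((α k • a k - α m • a m) + α m • a m) := by
        rw [sub_add_cancel, inv_smul_smul₀ (hα k)]
      rw [hak]
      exact smul_mem _ _ (add_mem (Submodule.mem_sup_left (subset_span ⟨k, hk, rfl⟩))
        (Submodule.mem_sup_right (mem_span_singleton_self _)))
    have frD : n - 1 ≤ finrank K (span K ((fun k => α k • a k - α m • a m) '' {k | k ≠ i})) := by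
      have h1 := Submodule.finrank_mono hXsup
      have h2 := Submodule.finrank_sup_add_finrank_inf_eq
        (span K ((fun k => α k • a k - α m • a m) '' {k | k ≠ i})) (span K {α m • a m})
      rw [finrank_span_singleton hum] at h2
      rw [frX i] at h1
      omega
    have hDF : span K ((fun k => α k • a k - α m • a m) '' {k | k ≠ i}) =
        span K (a '' {k | k ≠ i}) ⊓ span K (b '' {k | k ≠ i}) :=
      Submodule.eq_of_le_of_finrank_le (le_inf hDX hDY) (by rw [hinf]; exact frD)
    exact hDF ▸ hDker

/-- For two simplexes in projective `n`-space (`n ≥ 2`) in perspective from a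
point `V` and sharing no point and no face, the intersections of corresponding
faces all lie in a single fixed hyperplane (a subspace of vector dimension `n`
in the rank-`(n+1)` underlying space). -/
theorem corresponding_faces_in_hyperplane {K : Type*} [Field K] {n : ℕ} (hn : 2 ≤ n)
    (A B : Fin (n+1) → ℙ K (Fin (n+1) → K)) (V : ℙ K (Fin (n+1) → K))
    (hA : pspan K (Set.range A) = ⊤) (hB : pspan K (Set.range B) = ⊤)
    (hpt : ∀ i j : Fin (n+1), A i ≠ B j)
    (hface : ∀ i j : Fin (n+1),
      pspan K (A '' {k | k ≠ i}) ≠ pspan K (B '' {k | k ≠ j}))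
    (hV : ∀ i : Fin (n+1), V.submodule ≤ pspan K {A i, B i}) :
    ∃ H : Submodule K (Fin (n+1) → K), Module.finrank K H = n ∧
      ∀ i : Fin (n+1),
        pspan K (A '' {k | k ≠ i}) ⊓ pspan K (B '' {k | k ≠ i}) ≤ H := by
  classical
  have hconv : ∀ (f : Fin (n+1) → ℙ K (Fin (n+1) → K)) (s : Set (Fin (n+1))),
      pspan K (f '' s) = span K ((fun i => (f i).rep) '' s) := by
    intro f s
    rw [pspan_eq_span, Set.image_image]
  have hApspan : ∀ i, pspan K (A '' {k | k ≠ i}) =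
      span K ((fun i => (A i).rep) '' {k | k ≠ i}) := fun i => hconv A _
  have hBpspan : ∀ i, pspan K (B '' {k | k ≠ i}) =
      span K ((fun i => (B i).rep) '' {k | k ≠ i}) := fun i => hconv B _
  have hrangeA : pspan K (Set.range A) = span K (Set.range fun i => (A i).rep) := by
    rw [← Set.image_univ, hconv, Set.image_univ]
  have hrangeB : pspan K (Set.range B) = span K (Set.range fun i => (B i).rep) := by
    rw [← Set.image_univ, hconv, Set.image_univ]
  have frtop : finrank K (Fin (n+1) → K) = n + 1 := Module.finrank_fin_fun K
  have card_eq : Fintype.card (Fin (n+1)) = finrank K (Fin (n+1) → K) := by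
    rw [frtop, Fintype.card_fin]
  have haLI : LinearIndependent K (fun i => (A i).rep) := by
    have h := (basisOfTopLeSpanOfCardEqFinrank (fun i => (A i).rep)
      (le_of_eq (hrangeA.symm.trans hA).symm) card_eq).linearIndependent
    rwa [coe_basisOfTopLeSpanOfCardEqFinrank] at h
  have hbLI : LinearIndependent K (fun i => (B i).rep) := by
    have h := (basisOfTopLeSpanOfCardEqFinrank (fun i => (B i).rep)
      (le_of_eq (hrangeB.symm.trans hB).symm) card_eq).linearIndependent
    rwa [coe_basisOfTopLeSpanOfCardEqFinrank] at h
  have hVmem : ∀ i, V.rep ∈ span K {(A i).rep, (B i).rep} := by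
    intro i
    have h1 := hV i
    rw [pspan_eq_span, Set.image_pair] at h1
    exact h1 (by rw [Projectivization.submodule_eq]; exact mem_span_singleton_self _)
  choose α β hab using fun i => mem_span_pair.mp (hVmem i)
  have hface' : ∀ i : Fin (n+1), span K ((fun i => (A i).rep) '' {k | k ≠ i}) ≠
      span K ((fun i => (B i).rep) '' {k | k ≠ i}) := by
    intro i h
    exact hface i i (by rw [hApspan i, hBpspan i, h])
  by_cases hβ : ∀ i, β i ≠ 0
  · obtain ⟨H, h1, h2⟩ := main_aux hn _ _ haLI hbLI V.rep α β
      (fun i => (hab i).symm) hβ hface'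
    exact ⟨H, h1, fun i => by rw [hApspan i, hBpspan i]; exact h2 i⟩
  · push_neg at hβ
    obtain ⟨q, hq⟩ := hβ
    have hα : ∀ i, α i ≠ 0 := by
      intro i h0
      rcases eq_or_ne i q with rfl | hiq
      · exact V.rep_nonzero (by rw [← hab i, h0, hq, zero_smul, zero_smul, add_zero])
      · have h1 : V.rep = β i • (B i).rep := by rw [← hab i, h0, zero_smul, zero_add]
        have h2 : V.rep = α q • (A q).rep := by rw [← hab q, hq, zero_smul, add_zero]
        have hβi : β i ≠ 0 := by
          intro h
          exact V.rep_nonzero (by rw [h1, h, zero_smul])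
        have h3 : ((β i)⁻¹ * α q) • (A q).rep = (B i).rep := by
          rw [mul_smul, ← h2, h1, inv_smul_smul₀ hβi]
        have h4 : B i = A q := by
          rw [← (B i).mk_rep, ← (A q).mk_rep]
          exact (Projectivization.mk_eq_mk_iff' K _ _ _ _).mpr ⟨(β i)⁻¹ * α q, h3⟩
        exact hpt q i h4.symm
    obtain ⟨H, h1, h2⟩ := main_aux hn _ _ hbLI haLI V.rep β α
      (fun i => ((hab i).symm).trans (add_comm _ _)) hα (fun i => (hface' i).symm)
    refine ⟨H, h1, fun i => ?_⟩
    rw [hApspan i, hBpspan i, inf_comm]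
    exact h2 i
end

section
/- Let F be a field with more than 2 elements and let H be a hyperplane of projective n-space over F. Then there exists a set of n+2 points, every (n+1)-subset of which spans the whole space (a coordinate system/frame), such that none of the n+2 points lies in H. -/
open scoped LinearAlgebra.Projectivization
open Projectivization

/-!
Pick `u ∉ H` and a basis `c` of the hyperplane `H`, and take
`b₀ = a • u`, `bᵢ₊₁ = u + cᵢ` together with `∑ bᵢ = (a + n) • u + ∑ cᵢ`. The `b`'s span `V`, and
since the `n + 2` vectors satisfy a linear relation with all coefficients `± 1`, each of them lies
in the span of the others, so any `n + 1` of them span `V`. Every vector has the form `t • u + h`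
with `h ∈ H` and `t ∈ {1, a, a + n}`, so it avoids `H` as soon as `a ≠ 0` and `a + n ≠ 0`; such an
`a` exists because `K` has a third element besides `0` and `1`.
-/

open Module Submodule Finset

section

variable {K V : Type*} [DivisionRing K] [AddCommGroup V] [Module K V]

theorem pspan_image_mk {ι : Type*} (v : ι → V) (hv : ∀ i, v i ≠ 0) (s : Set ι) :
    pspan K ((fun i => mk K (v i) (hv i)) '' s) = span K (v '' s) := by
  rw [pspan, iSup_image, Set.image_eq_iUnion, span_iUnion₂]
  simp only [submodule_mk]

theorem span_image_compl_singleton_of_sum_smul_eq_zero {ι : Type*} [Fintype ι] [DecidableEq ι]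
    {v : ι → V} {c : ι → K} (hsum : ∑ i, c i • v i = 0) {k : ι} (hk : c k ≠ 0) :
    span K (v '' {k}ᶜ) = span K (Set.range v) := by
  refine le_antisymm (span_mono (Set.image_subset_range _ _)) (span_le.2 ?_)
  rintro _ ⟨i, rfl⟩
  by_cases hi : i = k
  · subst hi
    have hrest : ∑ j ∈ univ.erase i, c j • v j ∈ span K (v '' {i}ᶜ) :=
      sum_mem fun j hj => smul_mem _ _ (subset_span ⟨j, ne_of_mem_erase hj, rfl⟩)
    have hvi : c i • v i = -∑ j ∈ univ.erase i, c j • v j := by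
      rw [eq_neg_iff_add_eq_zero, add_sum_erase _ (fun j => c j • v j) (mem_univ i), hsum]
    refine (smul_mem_iff _ hk).1 ?_
    rw [hvi]
    exact neg_mem hrest
  · exact subset_span ⟨i, hi, rfl⟩

theorem span_image_compl_singleton_snoc_sum {m : ℕ} (b : Fin m → V) (k : Fin (m + 1)) :
    span K (Fin.snoc b (∑ i, b i) '' {k}ᶜ) = span K (Set.range b) := by
  have hsum : ∑ i, (Fin.snoc (fun _ => 1) (-1) : Fin (m + 1) → K) i •
      (Fin.snoc b (∑ i, b i) : Fin (m + 1) → V) i = 0 := by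
    simp [Fin.sum_univ_castSucc]
  have hk : (Fin.snoc (fun _ => 1) (-1) : Fin (m + 1) → K) k ≠ 0 := by
    induction k using Fin.lastCases <;> simp
  rw [span_image_compl_singleton_of_sum_smul_eq_zero hsum hk, Fin.range_snoc]
  exact span_insert_eq_span (sum_mem fun i _ => subset_span ⟨i, rfl⟩)

end

theorem exists_ne_zero_and_add_ne_zero {K : Type*} [Ring K] [Nontrivial K]
    (hK : ∃ x : K, x ≠ 0 ∧ x ≠ 1) (m : K) : ∃ a : K, a ≠ 0 ∧ a + m ≠ 0 := by
  by_cases h1 : 1 + m = 0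
  · obtain ⟨x, hx0, hx1⟩ := hK
    exact ⟨x, hx0, fun hx => hx1 (add_right_cancel (hx.trans h1.symm))⟩
  · exact ⟨1, one_ne_zero, h1⟩

section Hyperplane

variable {K V : Type*} [Field K] [AddCommGroup V] [Module K V] {H : Submodule K V}

theorem smul_add_notMem {u h : V} {t : K} (hu : u ∉ H) (ht : t ≠ 0) (hh : h ∈ H) :
    t • u + h ∉ H := by
  rwa [H.add_mem_iff_left hh, H.smul_mem_iff ht]

theorem sup_span_singleton_eq_top [FiniteDimensional K V] (hH : finrank K H + 1 = finrank K V)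
    {u : V} (hu : u ∉ H) : H ⊔ K ∙ u = ⊤ :=
  eq_top_of_finrank_eq (by rw [finrank_sup_span_singleton hu, hH])

theorem exists_frame_notMem [FiniteDimensional K V] (hK : ∃ x : K, x ≠ 0 ∧ x ≠ 1) {n : ℕ}
    (hH : finrank K H = n) (hV : finrank K V = n + 1) :
    ∃ v : Fin (n + 2) → V, (∀ k, span K (v '' {k}ᶜ) = ⊤) ∧ ∀ i, v i ∉ H := by
  obtain ⟨u, -, hu⟩ := SetLike.exists_of_lt (lt_top_iff_ne_top.2 fun h : H = ⊤ => by
    rw [h, finrank_top] at hH; omega)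
  obtain ⟨a, ha, han⟩ := exists_ne_zero_and_add_ne_zero hK (n : K)
  let c := finBasisOfFinrankEq K H hH
  let b : Fin (n + 1) → V := Fin.cons (a • u) fun i => u + c i
  have hb : span K (Set.range b) = ⊤ := by
    rw [eq_top_iff, ← sup_span_singleton_eq_top (by rw [hH, hV]) hu, sup_le_iff,
      span_singleton_le_iff_mem]
    have hu_mem : u ∈ span K (Set.range b) :=
      (smul_mem_iff _ ha).1 (subset_span ⟨0, rfl⟩)
    have hc_mem : ∀ i, (c i : V) ∈ span K (Set.range b) := fun i => by
      simpa [b] using sub_mem (subset_span (Set.mem_range_self i.succ)) hu_mem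
    refine ⟨fun x hx => ?_, hu_mem⟩
    lift x to H using hx
    rw [← c.sum_repr x, Submodule.coe_sum]
    exact sum_mem fun i _ => smul_mem _ _ (hc_mem i)
  have hsum : ∑ i, b i = (a + n) • u + ∑ i, (c i : V) := by
    simp only [b, Fin.sum_univ_succ, Fin.cons_zero, Fin.cons_succ, sum_add_distrib, sum_const,
      card_univ, Fintype.card_fin, add_smul, Nat.cast_smul_eq_nsmul]
    abel
  refine ⟨Fin.snoc b (∑ i, b i), fun k => by rw [span_image_compl_singleton_snoc_sum, hb], ?_⟩
  have hb_notMem : ∀ j, b j ∉ H := Fin.cases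
    (by simpa [b] using smul_add_notMem hu ha H.zero_mem)
    fun i => by simpa [b] using smul_add_notMem hu one_ne_zero (c i).2
  refine Fin.lastCases ?_ fun j => ?_
  · simpa [hsum] using smul_add_notMem hu han (sum_mem fun i _ => (c i).2)
  · simpa using hb_notMem j

end Hyperplane

/-- Over a field with more than two elements, for any hyperplane `H` of
projective `n`-space there exists a coordinate system (frame) of `n+2` points,
every `n+1` of which span the space, none of which lies in `H`. -/
theorem frame_avoiding_hyperplane {K : Type*} [Field K]
    -- `K` has more than two elements
    (hK : ∃ x : K, x ≠ 0 ∧ x ≠ 1)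
    {n : ℕ} (H : Submodule K (Fin (n+1) → K)) (hH : Module.finrank K H = n) :
    ∃ P : Fin (n+2) → ℙ K (Fin (n+1) → K),
      (∀ S : Finset (Fin (n+2)), S.card = n + 1 → pspan K (P '' ↑S) = ⊤) ∧
      ∀ i : Fin (n+2), ¬ (P i).submodule ≤ H := by
  obtain ⟨v, hv_span, hv_notMem⟩ := exists_frame_notMem hK hH (by simp)
  have hv : ∀ i, v i ≠ 0 := fun i h => hv_notMem i (h ▸ H.zero_mem)
  refine ⟨fun i => mk K (v i) (hv i), fun S hS => ?_, fun i => ?_⟩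
  · obtain ⟨k, hk⟩ := card_eq_one.1 (by rw [card_compl, hS, Fintype.card_fin]; omega :
      Sᶜ.card = 1)
    rw [pspan_image_mk, ← compl_compl S, hk, coe_compl, coe_singleton, hv_span]
  · rw [submodule_mk, span_singleton_le_iff_mem]
    exact hv_notMem i
end

section
/- Let Γ be an (n+3)-arc in projective (n+1)-space and H a hyperplane disjoint from Γ. For any subset S of Γ of size t+1 (2 ≤ t+1 ≤ n+2), the span of S has projective dimension t, and its intersection with H, which contains all points (i,j) for i,j ∈ S, is a subspace of projective dimension t-1 spanned by these points (i,j). -/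
/-!
Completing `S` to `n + 2` arc points, which span the `(n + 2)`-dimensional space, shows that
representatives of the points of `S` are linearly independent, so `⟨S⟩` has rank `|S|`.
Fix `i ∈ S`. As `Γ i ∉ H`, the trace `(i,k)` is a point of the line `Γ i Γ k` other than `Γ i`,
so `Γ k ∈ ⟨(i,k), Γ i⟩`. Thus the traces together with `Γ i` span `⟨S⟩`, while the traces lie in
`⟨S⟩ ∩ H`, which is proper in `⟨S⟩`; counting ranks forces both to have rank `|S| - 1` and to
coincide.
-/

open scoped LinearAlgebra.Projectivization
open Projectivization

open Module Submodule

section Pspan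

variable {K V : Type*} [DivisionRing K] [AddCommGroup V] [Module K V]

lemma pspan_image_s9 {ι : Type*} (Γ : ι → ℙ K V) (s : Set ι) :
    pspan K (Γ '' s) = ⨆ k ∈ s, (Γ k).submodule :=
  iSup_image ..

lemma submodule_le_pspan {s : Set (ℙ K V)} {P : ℙ K V} (hP : P ∈ s) : P.submodule ≤ pspan K s :=
  le_biSup Projectivization.submodule hP

lemma pspan_mono {s t : Set (ℙ K V)} (h : s ⊆ t) : pspan K s ≤ pspan K t :=
  biSup_mono h

lemma pspan_eq_span_rep (s : Set (ℙ K V)) : pspan K s = span K (Projectivization.rep '' s) := by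
  simp only [pspan, Projectivization.submodule_eq, Set.image_eq_iUnion, span_iUnion₂]

lemma pspan_pair_s9 (P Q : ℙ K V) : pspan K {P, Q} = span K {P.rep, Q.rep} := by
  rw [pspan_eq_span_rep, Set.image_pair]

lemma Projectivization.submodule_le_sup_of_le_pspan_pair {A B C : ℙ K V}
    (hC : C.submodule ≤ pspan K {A, B}) (hCA : C ≠ A) :
    B.submodule ≤ C.submodule ⊔ A.submodule := by
  have hCmem : C.rep ∈ span K (insert B.rep {A.rep}) := by
    rw [Set.pair_comm, ← pspan_pair_s9]
    exact hC (C.submodule_eq ▸ mem_span_singleton_self _)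
  have hCnot : C.rep ∉ span K {A.rep} := fun h => hCA <| submodule_injective <|
    eq_of_le_of_finrank_eq (by rwa [submodule_eq C, span_singleton_le_iff_mem, submodule_eq])
      (by rw [finrank_submodule, finrank_submodule])
  rw [submodule_eq B, span_singleton_le_iff_mem, submodule_eq, submodule_eq, ← span_insert]
  exact mem_span_insert_exchange hCmem hCnot

lemma linearIndepOn_rep_of_pspan_eq_top {ι : Type*} [FiniteDimensional K V] {Γ : ι → ℙ K V}
    {T : Finset ι} (hT : pspan K (Γ '' T) = ⊤) (hcard : T.card = finrank K V) :
    LinearIndepOn K (fun k => (Γ k).rep) (T : Set ι) := by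
  refine linearIndependent_of_top_le_span_of_card_eq_finrank ?_ (by simpa using hcard)
  rw [← hT, pspan_eq_span_rep, Set.image_image, Set.image_eq_range]

lemma finrank_pspan_image_of_linearIndepOn {ι : Type*} {Γ : ι → ℙ K V} {S : Finset ι}
    (hS : LinearIndepOn K (fun k => (Γ k).rep) (S : Set ι)) :
    finrank K (pspan K (Γ '' S)) = S.card := by
  rw [pspan_eq_span_rep, Set.image_image, Set.image_eq_range, finrank_span_eq_card hS]
  simp

lemma Submodule.inf_eq_and_finrank_succ_of_le_sup [FiniteDimensional K V]
    {W H P L : Submodule K V} (hP : P ≤ W ⊓ H) (hW : W ≤ P ⊔ L) (hL : finrank K L = 1)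
    (hWH : ¬ W ≤ H) :
    W ⊓ H = P ∧ finrank K ↥(W ⊓ H) + 1 = finrank K W := by
  have hlt : finrank K ↥(W ⊓ H) < finrank K W :=
    finrank_lt_finrank_of_lt (inf_le_left.lt_of_ne fun h => hWH (h ▸ inf_le_right))
  have hle : finrank K W ≤ finrank K P + 1 :=
    calc finrank K W ≤ finrank K ↥(P ⊔ L) := finrank_mono hW
      _ ≤ finrank K P + finrank K L := finrank_add_le_finrank_add_finrank P L
      _ = finrank K P + 1 := by rw [hL]
  have hPW : finrank K P ≤ finrank K ↥(W ⊓ H) := finrank_mono hP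
  exact ⟨(eq_of_le_of_finrank_eq hP (by omega)).symm, by omega⟩

end Pspan

theorem arc_subset_section_general {K : Type*} [Field K] {n : ℕ}
    (Γ : Fin (n+3) → ℙ K (Fin (n+2) → K))
    (H : Submodule K (Fin (n+2) → K))
    (pt : Fin (n+3) → Fin (n+3) → ℙ K (Fin (n+2) → K))
    (hΓ : ∀ S : Finset (Fin (n+3)), S.card = n + 2 → pspan K (Γ '' ↑S) = ⊤)
    (hdisj : ∀ k : Fin (n+3), ¬ (Γ k).submodule ≤ H)
    (hpt : ∀ i j : Fin (n+3), i ≠ j →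
      (pt i j).submodule ≤ pspan K {Γ i, Γ j} ∧ (pt i j).submodule ≤ H) :
    ∀ S : Finset (Fin (n+3)), 2 ≤ S.card → S.card ≤ n + 2 →
      Module.finrank K ↥(pspan K (Γ '' ↑S)) = S.card ∧
      pspan K (Γ '' ↑S) ⊓ H
        = (⨆ i ∈ S, ⨆ j ∈ S, ⨆ _ : i ≠ j, (pt i j).submodule) ∧
      Module.finrank K ↥(pspan K (Γ '' ↑S) ⊓ H) = S.card - 1 := by
  intro S h2 hle
  obtain ⟨T, hST, hTcard⟩ := Finset.exists_superset_card_eq hle (by simp)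
  have hrank : finrank K (pspan K (Γ '' S)) = S.card := finrank_pspan_image_of_linearIndepOn
    ((linearIndepOn_rep_of_pspan_eq_top (hΓ T hTcard) (by simp [hTcard])).mono hST)
  set P := ⨆ i ∈ S, ⨆ j ∈ S, ⨆ _ : i ≠ j, (pt i j).submodule
  have hP : P ≤ pspan K (Γ '' S) ⊓ H :=
    iSup₂_le fun i hi => iSup₂_le fun j hj => iSup_le fun hij =>
      le_inf ((hpt i j hij).1.trans (pspan_mono
        (Set.pair_subset (Set.mem_image_of_mem Γ hi) (Set.mem_image_of_mem Γ hj))))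
        (hpt i j hij).2
  obtain ⟨i, hi⟩ : S.Nonempty := Finset.card_pos.mp (by omega)
  have hW : pspan K (Γ '' S) ≤ P ⊔ (Γ i).submodule := by
    rw [pspan_image_s9]
    refine iSup₂_le fun k hk => ?_
    rcases eq_or_ne i k with rfl | hik
    · exact le_sup_right
    · have hptP : (pt i k).submodule ≤ P :=
        le_iSup₂_of_le i hi (le_iSup₂_of_le k hk (le_iSup_of_le hik le_rfl))
      exact (submodule_le_sup_of_le_pspan_pair (hpt i k hik).1
        fun h => hdisj i (h ▸ (hpt i k hik).2)).trans (sup_le_sup_right hptP _)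
  obtain ⟨hsection, hrank_section⟩ := inf_eq_and_finrank_succ_of_le_sup hP hW
    (finrank_submodule _)
    fun h => hdisj i ((submodule_le_pspan (Set.mem_image_of_mem Γ hi)).trans h)
  exact ⟨hrank, hsection, by omega⟩

/-- Let `Γ` be an `(n+3)`-arc in projective `(n+1)`-space and `H` a hyperplane
disjoint from `Γ`.  For any subset `S` of the arc of size `t+1`
(`2 ≤ t+1 ≤ n+2`), the span of `S` has projective dimension `t` (vector rank
`t+1`), and its intersection with `H` is a subspace of projective dimension
`t-1` (vector rank `t`) spanned by the trace points `pt i j`, `i, j ∈ S`. -/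
theorem arc_subset_section {K : Type*} [Field K] {n : ℕ}
    (Γ : Fin (n+3) → ℙ K (Fin (n+2) → K))
    (H : Submodule K (Fin (n+2) → K))
    (pt : Fin (n+3) → Fin (n+3) → ℙ K (Fin (n+2) → K))
    (hΓ : ∀ S : Finset (Fin (n+3)), S.card = n + 2 → pspan K (Γ '' ↑S) = ⊤)
    (hH : Module.finrank K H = n + 1)
    (hdisj : ∀ k : Fin (n+3), ¬ (Γ k).submodule ≤ H)
    (hpt : ∀ i j : Fin (n+3), i ≠ j →
      (pt i j).submodule ≤ pspan K {Γ i, Γ j} ∧ (pt i j).submodule ≤ H)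
    (hsymm : ∀ i j : Fin (n+3), pt i j = pt j i) :
    ∀ S : Finset (Fin (n+3)), 2 ≤ S.card → S.card ≤ n + 2 →
      Module.finrank K ↥(pspan K (Γ '' ↑S)) = S.card ∧
      pspan K (Γ '' ↑S) ⊓ H
        = (⨆ i ∈ S, ⨆ j ∈ S, ⨆ _ : i ≠ j, (pt i j).submodule) ∧
      Module.finrank K ↥(pspan K (Γ '' ↑S) ⊓ H) = S.card - 1 :=
  arc_subset_section_general Γ H pt hΓ hdisj hpt
end

section
/- Let Γ = {1,...,n+3} be an (n+3)-arc in projective (n+1)-space and H a hyperplane disjoint from Γ. Then the n+2 points {(1,2),(1,3),...,(1,n+3)} form a coordinate system (frame) in H: every (n+1)-subset spans H. -/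
open scoped LinearAlgebra.Projectivization
open Projectivization

/-- Let `Γ` be an `(n+3)`-arc (indexed by `0,…,n+2`) in projective
`(n+1)`-space and `H` a hyperplane disjoint from `Γ`, with `pt i j` the trace
of line `ij` on `H`.  Then the `n+2` points `pt 0 i`, `i ≥ 1` (that is,
`(1,2),(1,3),…,(1,n+3)`), form a coordinate system (frame) in `H`: every
`(n+1)`-subset of them spans `H`. -/
theorem trace_points_frame {K : Type*} [Field K] {n : ℕ}
    (Γ : Fin (n+3) → ℙ K (Fin (n+2) → K))
    (H : Submodule K (Fin (n+2) → K))
    (pt : Fin (n+3) → Fin (n+3) → ℙ K (Fin (n+2) → K))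
    (hΓ : ∀ S : Finset (Fin (n+3)), S.card = n + 2 → pspan K (Γ '' ↑S) = ⊤)
    (hH : Module.finrank K H = n + 1)
    (hdisj : ∀ k : Fin (n+3), ¬ (Γ k).submodule ≤ H)
    (hpt : ∀ i j : Fin (n+3), i ≠ j →
      (pt i j).submodule ≤ pspan K {Γ i, Γ j} ∧ (pt i j).submodule ≤ H) :
    ∀ T : Finset (Fin (n+3)), (∀ i ∈ T, 1 ≤ (i : ℕ)) → T.card = n + 1 →
      (⨆ i ∈ T, (pt 0 i).submodule) = H := by
  intro T hT1 hTcard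
  have h0T : (0 : Fin (n+3)) ∉ T := fun h => by simpa using hT1 0 h
  have hne0 : ∀ i ∈ T, (0 : Fin (n+3)) ≠ i := by
    intro i hi h
    exact h0T (h ▸ hi)
  set W := ⨆ i ∈ T, (pt 0 i).submodule with hWdef
  have hWH : W ≤ H := by
    apply iSup₂_le
    intro i hi
    exact (hpt 0 i (hne0 i hi)).2
  -- Γ i ≤ Γ 0 ⊔ pt 0 i for i ∈ T
  have key : ∀ i ∈ T, (Γ i).submodule ≤ (Γ 0).submodule ⊔ (pt 0 i).submodule := by
    intro i hi
    have h1 : (pt 0 i).submodule ≤ (Γ 0).submodule ⊔ (Γ i).submodule := by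
      have := (hpt 0 i (hne0 i hi)).1
      rwa [pspan, iSup_pair] at this
    have hle : (Γ 0).submodule ⊔ (pt 0 i).submodule ≤ (Γ 0).submodule ⊔ (Γ i).submodule :=
      sup_le le_sup_left h1
    have hinf : (Γ 0).submodule ⊓ (pt 0 i).submodule = ⊥ := by
      by_contra hbot
      have hfr : Module.finrank K ((Γ 0).submodule ⊓ (pt 0 i).submodule : Submodule K _) ≠ 0 := by
        rwa [Ne, Submodule.finrank_eq_zero]
      have h1' : Module.finrank K ((Γ 0).submodule ⊓ (pt 0 i).submodule : Submodule K _)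
          ≤ Module.finrank K (Γ 0).submodule := Submodule.finrank_mono inf_le_left
      rw [finrank_submodule] at h1'
      have heq : (Γ 0).submodule ⊓ (pt 0 i).submodule = (Γ 0).submodule :=
        Submodule.eq_of_le_of_finrank_le inf_le_left (by rw [finrank_submodule]; omega)
      have : (Γ 0).submodule ≤ H := by
        calc (Γ 0).submodule = _ := heq.symm
        _ ≤ (pt 0 i).submodule := inf_le_right
        _ ≤ H := (hpt 0 i (hne0 i hi)).2
      exact hdisj 0 this
    have hfr2 : Module.finrank K ((Γ 0).submodule ⊔ (pt 0 i).submodule : Submodule K _) = 2 := by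
      have := Submodule.finrank_sup_add_finrank_inf_eq (Γ 0).submodule (pt 0 i).submodule
      rw [hinf, finrank_submodule, finrank_submodule, finrank_bot] at this
      omega
    have hfr3 : Module.finrank K ((Γ 0).submodule ⊔ (Γ i).submodule : Submodule K _) ≤ 2 := by
      have := Submodule.finrank_add_le_finrank_add_finrank (Γ 0).submodule (Γ i).submodule
      rw [finrank_submodule, finrank_submodule] at this
      omega
    have heq : (Γ 0).submodule ⊔ (pt 0 i).submodule = (Γ 0).submodule ⊔ (Γ i).submodule :=
      Submodule.eq_of_le_of_finrank_le hle (by omega)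
    exact heq ▸ le_sup_right
  -- Γ 0 ⊔ W = ⊤
  have htop : (Γ 0).submodule ⊔ W = ⊤ := by
    have hcard : (insert (0 : Fin (n+3)) T).card = n + 2 := by
      rw [Finset.card_insert_of_notMem h0T, hTcard]
    have hspan := hΓ _ hcard
    rw [pspan, iSup_image] at hspan
    rw [eq_top_iff, ← hspan]
    apply iSup₂_le
    intro i hi
    rcases Finset.mem_insert.mp hi with h | h
    · subst h; exact le_sup_left
    · refine le_trans (key i h) (sup_le le_sup_left ?_)
      exact le_trans (le_iSup₂ (f := fun i _ => (pt 0 i).submodule) i h) le_sup_right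
  have hfrW : n + 1 ≤ Module.finrank K W := by
    have h1 := Submodule.finrank_add_le_finrank_add_finrank (Γ 0).submodule W
    rw [htop, finrank_submodule] at h1
    have h2 : Module.finrank K (⊤ : Submodule K (Fin (n+2) → K)) = n + 2 := by
      simp [finrank_top]
    omega
  exact Submodule.eq_of_le_of_finrank_le hWH (by omega)
end

section
/- Let A = {A_3,...,A_{n+3}} and B = {B_3,...,B_{n+3}} be simplexes of projective n-space H in perspective from a point V, sharing no point, and such that V lies on no face of A or B. Embed H as a hyperplane of projective (n+1)-space. Then there exists an arc Γ = {1,2,...,n+3} of n+3 points in the (n+1)-space, none lying in H, such that V = line(1,2) ∩ H, A_i = line(1,i) ∩ H and B_i = line(2,i) ∩ H for all 3 ≤ i ≤ n+3. -/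
/-! Choose representatives `a i` of `A i` and `b i` of `B i` with `a i + b i = v`, where `v`
represents `V`; this is possible because `V` lies on the line `A i B i` but, being off the
faces, is neither `A i` nor `B i`. Lift off the hyperplane `H` along a vector `p ∉ H`:
`Γ 0 = p`, `Γ 1 = p - v`, `Γ (i + 2) = p - a i`. A line through two points `q, r ∉ H` meets
`H` in `q - r`, which gives the three trace conditions. Leaving out `Γ 0` (resp. `Γ 1`) still
spans all `b i` (resp. `a i`), hence `H`, together with a vector off `H`; leaving out
`Γ (j + 2)` still spans `v` and the face of `A` opposite `A j`, which span `H` because `V` is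
off that face. -/

open scoped LinearAlgebra.Projectivization
open Projectivization

open Submodule Module

section

variable {K W : Type*} [DivisionRing K] [AddCommGroup W] [Module K W]

theorem isCoatom_of_finrank_add_one [FiniteDimensional K W] {H : Submodule K W}
    (hH : finrank K H + 1 = finrank K W) : IsCoatom H := by
  refine ⟨fun h => by rw [h, finrank_top] at hH; omega, fun N hN => ?_⟩
  obtain ⟨x, hxN, hxH⟩ := SetLike.exists_of_lt hN
  refine eq_top_of_finrank_eq (le_antisymm (finrank_le _) ?_)
  calc finrank K W = finrank K ↥(H ⊔ K ∙ x) := by rw [finrank_sup_span_singleton hxH, hH]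
    _ ≤ finrank K N := finrank_mono (sup_le hN.le ((span_singleton_le_iff_mem _ _).2 hxN))

theorem eq_top_of_isCoatom_le {H N : Submodule K W} (hH : IsCoatom H) (hHN : H ≤ N)
    {x : W} (hxN : x ∈ N) (hxH : x ∉ H) : N = ⊤ :=
  (hH.le_iff.1 hHN).resolve_right fun h => hxH (h ▸ hxN)

theorem span_pair_inf_eq_span_sub {H : Submodule K W} {q r : W} (hq : q ∉ H)
    (hqr : q - r ∈ H) : span K {q, r} ⊓ H = K ∙ (q - r) := by
  have hpair : span K {q, r} = K ∙ (q - r) ⊔ K ∙ q := by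
    refine le_antisymm (span_le.2 (Set.insert_subset_iff.2 ⟨?_, Set.singleton_subset_iff.2 ?_⟩))
      (sup_le ?_ ?_)
    · exact mem_sup_right (mem_span_singleton_self q)
    · simpa using sub_mem (mem_sup_right (mem_span_singleton_self q))
          (mem_sup_left (mem_span_singleton_self (q - r)))
    · exact (span_singleton_le_iff_mem _ _).2
        (sub_mem (subset_span (by simp)) (subset_span (by simp)))
    · exact span_mono (by simp)
  rw [hpair, sup_inf_assoc_of_le _ ((span_singleton_le_iff_mem _ _).2 hqr),
    (disjoint_span_singleton_of_notMem hq).symm.eq_bot, sup_bot_eq]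

theorem span_range_le_span_insert_face {ι : Type*} (a : ι → W) (j : ι) {v : W}
    (hv : v ∈ span K (Set.range a)) (hvj : v ∉ span K (a '' {k | k ≠ j})) :
    span K (Set.range a) ≤ span K (insert v (a '' {k | k ≠ j})) := by
  have hrange : Set.range a = insert (a j) (a '' {k | k ≠ j}) := by
    rw [← Set.image_insert_eq, ← Set.image_univ]
    congr 1
    ext k
    simp [em]
  rw [span_le, hrange, Set.insert_subset_iff]
  exact ⟨mem_span_insert_exchange (hrange ▸ hv) hvj,
    (Set.subset_insert _ _).trans subset_span⟩

theorem pspan_image_s13 {ι : Type*} (f : ι → ℙ K W) (g : ι → W)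
    (hfg : ∀ i, (f i).submodule = K ∙ g i) (t : Set ι) :
    pspan K (f '' t) = span K (g '' t) := by
  rw [pspan, iSup_image, Set.image_eq_iUnion, span_iUnion₂]
  simp_rw [hfg]

theorem pspan_range_s13 {ι : Type*} (f : ι → ℙ K W) (g : ι → W)
    (hfg : ∀ i, (f i).submodule = K ∙ g i) : pspan K (Set.range f) = span K (Set.range g) := by
  rw [← Set.image_univ, pspan_image_s13 f g hfg, Set.image_univ]

theorem pspan_pair_s13 (P Q : ℙ K W) : pspan K {P, Q} = P.submodule ⊔ Q.submodule := by
  rw [pspan, iSup_pair]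

theorem le_pspan {P : ℙ K W} {s : Set (ℙ K W)} (h : P ∈ s) : P.submodule ≤ pspan K s :=
  le_iSup₂ (f := fun P _ => Projectivization.submodule P) P h

theorem pspan_range_of_subsingleton {ι : Type*} [Subsingleton ι] (f : ι → ℙ K W) (i : ι) :
    pspan K (Set.range f) = (f i).submodule := by
  have : Unique ι := uniqueOfSubsingleton i
  simp [pspan, Set.range_unique, Subsingleton.elim default i]

theorem nontrivial_of_pspan_range_eq {ι : Type*} [Nonempty ι] {A B : ι → ℙ K W}
    (h : pspan K (Set.range A) = pspan K (Set.range B)) (hAB : ∀ i j, A i ≠ B j) :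
    Nontrivial ι := by
  obtain ⟨i⟩ := ‹Nonempty ι›
  refine not_subsingleton_iff_nontrivial.1 fun _ => hAB i i (submodule_injective ?_)
  rw [← pspan_range_of_subsingleton A, h, pspan_range_of_subsingleton B]

theorem ne_of_forall_not_le_pspan_face {ι : Type*} [Nontrivial ι] {A : ι → ℙ K W} {V : ℙ K W}
    (h : ∀ j, ¬ V.submodule ≤ pspan K (A '' {k | k ≠ j})) (i : ι) : V ≠ A i := by
  rintro rfl
  obtain ⟨j, hj⟩ := exists_ne i
  exact h j (le_pspan (Set.mem_image_of_mem A hj.symm))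

theorem pspan_pair_mk_inf {H : Submodule K W} {q r : W} (hq0 : q ≠ 0) (hr0 : r ≠ 0)
    (hq : q ∉ H) (hqr : q - r ∈ H) :
    pspan K {mk K q hq0, mk K r hr0} ⊓ H = K ∙ (q - r) := by
  rw [pspan_pair_s13, submodule_mk, submodule_mk, ← span_insert, span_pair_inf_eq_span_sub hq hqr]

theorem eq_of_rep_eq_smul {P Q : ℙ K W} {c : K} (h : P.rep = c • Q.rep) : P = Q := by
  rw [← P.mk_rep, ← Q.mk_rep, mk_eq_mk_iff']
  exact ⟨c, h.symm⟩

theorem exists_add_eq_rep_of_le_pspan_pair {P Q R : ℙ K W} (h : R.submodule ≤ pspan K {P, Q})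
    (hRP : R ≠ P) (hRQ : R ≠ Q) :
    ∃ a b : W, P.submodule = K ∙ a ∧ Q.submodule = K ∙ b ∧ a + b = R.rep := by
  rw [pspan_pair_s13, submodule_eq P, submodule_eq Q, submodule_eq R, ← span_insert,
    span_singleton_le_iff_mem, mem_span_pair] at h
  obtain ⟨c, d, hcd⟩ := h
  have hc : c ≠ 0 := by
    rintro rfl
    exact hRQ (eq_of_rep_eq_smul (by simpa using hcd.symm))
  have hd : d ≠ 0 := by
    rintro rfl
    exact hRP (eq_of_rep_eq_smul (by simpa using hcd.symm))
  exact ⟨c • P.rep, d • Q.rep, by rw [submodule_eq, span_singleton_smul_eq hc.isUnit],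
    by rw [submodule_eq, span_singleton_smul_eq hd.isUnit], hcd⟩

variable {m : ℕ}

def liftedArc (p v : W) (a : Fin m → W) : Fin (m + 2) → W :=
  Fin.cons p (Fin.cons (p - v) fun i => p - a i)

variable {p v : W} {a : Fin m → W}

@[simp] theorem liftedArc_zero : liftedArc p v a 0 = p := rfl

@[simp] theorem liftedArc_one : liftedArc p v a 1 = p - v := rfl

@[simp] theorem liftedArc_succ_succ (i : Fin m) : liftedArc p v a i.succ.succ = p - a i := rfl

theorem liftedArc_notMem {H : Submodule K W} (hp : p ∉ H) (hv : v ∈ H) (ha : ∀ i, a i ∈ H)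
    (k : Fin (m + 2)) : liftedArc p v a k ∉ H := by
  refine Fin.cases hp (Fin.cases ?_ fun i => ?_) k
  · exact (H.sub_mem_iff_left hv).not.2 hp
  · exact (H.sub_mem_iff_left (ha i)).not.2 hp

theorem span_liftedArc_compl_eq_top {H : Submodule K W} (hH : IsCoatom H) (hp : p ∉ H)
    (hv : v ∈ H) (hA : span K (Set.range a) = H)
    (hB : span K (Set.range fun i => v - a i) = H)
    (hface : ∀ j, v ∉ span K (a '' {k | k ≠ j})) (k : Fin (m + 2)) :
    span K (liftedArc p v a '' {k}ᶜ) = ⊤ := by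
  set N := span K (liftedArc p v a '' {k}ᶜ)
  have hw : ∀ j ≠ k, liftedArc p v a j ∈ N := fun j hj => subset_span ⟨j, hj, rfl⟩
  have ha : ∀ i, a i ∈ H := fun i => hA ▸ subset_span (Set.mem_range_self i)
  induction k using Fin.cases with
  | zero =>
    refine eq_top_of_isCoatom_le hH ?_ (hw 1 one_ne_zero) ((H.sub_mem_iff_left hv).not.2 hp)
    refine hB ▸ span_le.2 (Set.range_subset_iff.2 fun i => ?_)
    simpa using N.sub_mem (hw i.succ.succ (Fin.succ_ne_zero _)) (hw 1 one_ne_zero)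
  | succ k =>
    have hp0 : p ∈ N := hw 0 (Fin.succ_ne_zero k).symm
    refine eq_top_of_isCoatom_le hH ?_ hp0 hp
    induction k using Fin.cases with
    | zero =>
      refine hA ▸ span_le.2 (Set.range_subset_iff.2 fun i => ?_)
      simpa using N.sub_mem hp0 (hw i.succ.succ ((Fin.succ_injective _).ne (Fin.succ_ne_zero i)))
    | succ j =>
      have hvN : v ∈ N := by
        simpa using N.sub_mem hp0 (hw 1 ((Fin.succ_injective _).ne (Fin.succ_ne_zero j).symm))
      refine hA ▸ (span_range_le_span_insert_face a j (hA ▸ hv) (hface j)).trans (span_le.2 ?_)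
      rintro x (rfl | ⟨i, hij, rfl⟩)
      · exact hvN
      · simpa using N.sub_mem hp0 (hw i.succ.succ (by simpa using hij))

end

theorem perspective_simplexes_from_arc_general {K : Type*} [Field K] {n : ℕ}
    (H : Submodule K (Fin (n+2) → K)) (hH : Module.finrank K H = n + 1)
    (A B : Fin (n+1) → ℙ K (Fin (n+2) → K)) (V : ℙ K (Fin (n+2) → K))
    -- the simplexes and the vertex lie in the hyperplane `H`
    (hVH : V.submodule ≤ H)
    -- `A` and `B` are simplexes of `H`: their `n+1` points span `H`
    (hA : pspan K (Set.range A) = H) (hB : pspan K (Set.range B) = H)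
    -- in perspective from `V`
    (hV : ∀ i : Fin (n+1), V.submodule ≤ pspan K {A i, B i})
    -- no common point
    (hpt : ∀ i j : Fin (n+1), A i ≠ B j)
    -- `V` lies on no face of `A` or of `B`
    (hVface : ∀ i : Fin (n+1),
      ¬ V.submodule ≤ pspan K (A '' {k | k ≠ i}) ∧
      ¬ V.submodule ≤ pspan K (B '' {k | k ≠ i})) :
    ∃ Γ : Fin (n+3) → ℙ K (Fin (n+2) → K),
      -- `Γ` is an arc: every `(n+2)`-subset spans the `(n+1)`-space
      (∀ S : Finset (Fin (n+3)), S.card = n + 2 → pspan K (Γ '' ↑S) = ⊤) ∧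
      -- no point of `Γ` lies in `H`
      (∀ k : Fin (n+3), ¬ (Γ k).submodule ≤ H) ∧
      -- `V`, `A i`, `B i` are the traces of the appropriate lines on `H`
      V.submodule = pspan K {Γ 0, Γ 1} ⊓ H ∧
      (∀ i : Fin (n+1), (A i).submodule = pspan K {Γ 0, Γ i.succ.succ} ⊓ H) ∧
      (∀ i : Fin (n+1), (B i).submodule = pspan K {Γ 1, Γ i.succ.succ} ⊓ H) := by
  have := nontrivial_of_pspan_range_eq (hA.trans hB.symm) hpt
  choose a b ha hb hab using fun i => exists_add_eq_rep_of_le_pspan_pair (hV i)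
    (ne_of_forall_not_le_pspan_face (fun j => (hVface j).1) i)
    (ne_of_forall_not_le_pspan_face (fun j => (hVface j).2) i)
  obtain rfl : b = fun i => V.rep - a i := funext fun i => eq_sub_of_add_eq' (hab i)
  have haspan : span K (Set.range a) = H := (pspan_range_s13 A a ha).symm.trans hA
  have hbspan : span K (Set.range _) = H := (pspan_range_s13 B _ hb).symm.trans hB
  have hvH : V.rep ∈ H := by rw [← span_singleton_le_iff_mem, ← submodule_eq]; exact hVH
  have haH : ∀ i, a i ∈ H := fun i => haspan ▸ subset_span (Set.mem_range_self i)
  have hface : ∀ j, V.rep ∉ span K (a '' {k | k ≠ j}) := fun j h => (hVface j).1 (by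
    rwa [pspan_image_s13 A a ha, submodule_eq, span_singleton_le_iff_mem])
  have hHc : IsCoatom H := isCoatom_of_finrank_add_one (by rw [hH, finrank_fin_fun])
  obtain ⟨p, -, hp⟩ := SetLike.exists_of_lt hHc.lt_top
  have hwH := liftedArc_notMem hp hvH haH
  have hw0 : ∀ k, liftedArc p V.rep a k ≠ 0 := fun k h => hwH k (h ▸ H.zero_mem)
  refine ⟨fun k => mk K _ (hw0 k), fun S hS => ?_, fun k => ?_, ?_, fun i => ?_, fun i => ?_⟩
  · obtain ⟨k, hk⟩ := Finset.card_eq_one.1 (by simp [Finset.card_compl, hS] : Sᶜ.card = 1)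
    rw [← compl_compl S, hk, Finset.coe_compl, Finset.coe_singleton,
      pspan_image_s13 _ _ fun _ => submodule_mk _ _]
    exact span_liftedArc_compl_eq_top hHc hp hvH haspan hbspan hface k
  · rw [submodule_mk, span_singleton_le_iff_mem]
    exact hwH k
  · rw [pspan_pair_mk_inf _ _ (hwH 0) (by simpa using hvH), submodule_eq]
    simp
  · rw [pspan_pair_mk_inf _ _ (hwH 0) (by simpa using haH i), ha]
    simp
  · rw [Set.pair_comm, pspan_pair_mk_inf _ _ (hwH _) (by simpa using H.sub_mem hvH (haH i)), hb]
    simp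

/-- Two simplexes `A`, `B` of a projective `n`-space `H` (embedded as a
hyperplane of projective `(n+1)`-space), in perspective from a point `V`,
sharing no point, with `V` on no face of `A` or `B`, arise from an arc of
`n+3` points of the `(n+1)`-space, none lying in `H`: `V` is the trace of the
line through arc points `0,1` on `H`, `A i` the trace of the line through `0`
and `i+2`, and `B i` the trace of the line through `1` and `i+2`. -/
theorem perspective_simplexes_from_arc {K : Type*} [Field K] {n : ℕ}
    (H : Submodule K (Fin (n+2) → K)) (hH : Module.finrank K H = n + 1)
    (A B : Fin (n+1) → ℙ K (Fin (n+2) → K)) (V : ℙ K (Fin (n+2) → K))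
    -- the simplexes and the vertex lie in the hyperplane `H`
    (hAH : ∀ i, (A i).submodule ≤ H) (hBH : ∀ i, (B i).submodule ≤ H)
    (hVH : V.submodule ≤ H)
    -- `A` and `B` are simplexes of `H`: their `n+1` points span `H`
    (hA : pspan K (Set.range A) = H) (hB : pspan K (Set.range B) = H)
    -- in perspective from `V`
    (hV : ∀ i : Fin (n+1), V.submodule ≤ pspan K {A i, B i})
    -- no common point
    (hpt : ∀ i j : Fin (n+1), A i ≠ B j)
    -- `V` lies on no face of `A` or of `B`
    (hVface : ∀ i : Fin (n+1),
      ¬ V.submodule ≤ pspan K (A '' {k | k ≠ i}) ∧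
      ¬ V.submodule ≤ pspan K (B '' {k | k ≠ i})) :
    ∃ Γ : Fin (n+3) → ℙ K (Fin (n+2) → K),
      -- `Γ` is an arc: every `(n+2)`-subset spans the `(n+1)`-space
      (∀ S : Finset (Fin (n+3)), S.card = n + 2 → pspan K (Γ '' ↑S) = ⊤) ∧
      -- no point of `Γ` lies in `H`
      (∀ k : Fin (n+3), ¬ (Γ k).submodule ≤ H) ∧
      -- `V`, `A i`, `B i` are the traces of the appropriate lines on `H`
      V.submodule = pspan K {Γ 0, Γ 1} ⊓ H ∧
      (∀ i : Fin (n+1), (A i).submodule = pspan K {Γ 0, Γ i.succ.succ} ⊓ H) ∧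
      (∀ i : Fin (n+1), (B i).submodule = pspan K {Γ 1, Γ i.succ.succ} ⊓ H) :=
  perspective_simplexes_from_arc_general H hH A B V hVH hA hB hV hpt hVface
end
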